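/- arXiv:2006.07651 — 3 statements merged into one kernel-verified Lean document; each statement's English description precedes it below -/
import Mathlib

section
/- Fix b ∈ C_c(ℝ^D) and w ∈ W, and set B_N := (1/w_N) Σ_{n=1}^N w(n/N) b(U_n). Then the following are equivalent: (i) for every fixed m ≥ 1, the limit lim_{N→∞} (1/w_N) Σ_{n=1}^N w(n/N) ∫_Q b(U_n) b(U_m) dy exists; (ii) there exists \bar{b} ∈ L^∞(Q) such that B_N → \bar{b} weak-* in L^∞(Q), i.e., ∫_Q B_N φ dy → ∫_Q \bar{b} φ dy for every φ ∈ L¹(Q). Moreover, if the limits in (i) exist for every w ∈ W and their values are independent of w, then the weak-* limit \bar{b} is the same for every w ∈ W. -/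
/-!
Write `g_n = b ∘ U_n`. Since `w ≥ 0`, each `B_N` is a convex combination of the `g_n` (or `0`),
so `|B_N| ≤ sup |b|`, and the correlation hypothesis says that `⟪B_N, g_m⟫` in `L²(Q)` converges
for every `m`. As `B_N` is bounded in `L²` and lies in the span `V` of the `g_n`, the inner
products `⟪B_N, φ⟫` then converge for `φ` in the closure of `V`, trivially (they vanish) for
`φ ⊥ V`, hence for every `φ`: `B_N` converges weakly in `L²` to some `b̄`. The set integrals of
`b̄` are limits of those of `B_N`, so `|b̄| ≤ sup |b|` a.e., and the uniform bound upgrades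
convergence against indicators to convergence against all of `L¹`. Conversely, testing weak-*
convergence against `φ = g_m` gives the correlation limits.

A weak limit of elements of `V` lies in the closure of `V`, where it is determined by its inner
products with the `g_m`, that is, by the correlation limits; if these do not depend on `w`,
neither does `b̄`.
-/

open MeasureTheory Filter Topology

noncomputable section

/-- The class `W` of weight functions: `w ∈ C¹([0,1])`, `w ≥ 0` on `[0,1]`,
`∫_0^1 w(z) dz = 1`. -/
def IsWeight (w : ℝ → ℝ) : Prop :=
  ContDiffOn ℝ 1 w (Set.Icc 0 1) ∧ (∀ z ∈ Set.Icc (0 : ℝ) 1, 0 ≤ w z) ∧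
    (∫ z in (0 : ℝ)..1, w z) = 1

/-- `w_N = ∑_{n=1}^N w(n/N)`. -/
def wsum (w : ℝ → ℝ) (N : ℕ) : ℝ := ∑ n ∈ Finset.Icc 1 N, w ((n : ℝ) / (N : ℝ))

open scoped RealInnerProductSpace ENNReal

section Hilbert
variable {E : Type*} [NormedAddCommGroup E] [InnerProductSpace ℝ E]

def innerConvergentSubmodule (x : ℕ → E) : Submodule ℝ E where
  carrier := {φ | ∃ l, Tendsto (fun N => ⟪x N, φ⟫) atTop (𝓝 l)}
  add_mem' := fun ⟨l₁, h₁⟩ ⟨l₂, h₂⟩ => ⟨l₁ + l₂, by simpa only [inner_add_right] using h₁.add h₂⟩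
  zero_mem' := ⟨0, by simp⟩
  smul_mem' c _ := fun ⟨l, h⟩ => ⟨c * l, by simpa only [inner_smul_right] using h.const_mul c⟩

lemma dist_inner_le_of_norm_le {a : E} {C : ℝ} (ha : ‖a‖ ≤ C) (φ ψ : E) :
    dist ⟪a, φ⟫ ⟪a, ψ⟫ ≤ C * dist φ ψ := by
  rw [dist_eq_norm, ← inner_sub_right, dist_eq_norm]
  exact (norm_inner_le_norm _ _).trans (mul_le_mul_of_nonneg_right ha (norm_nonneg _))

lemma isClosed_innerConvergentSubmodule {x : ℕ → E} {C : ℝ} (hC : ∀ N, ‖x N‖ ≤ C) :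
    IsClosed (innerConvergentSubmodule x : Set E) := by
  -- convergence is the Cauchy property, a limit condition on a family that is equicontinuous in `φ`
  have hcarrier : (innerConvergentSubmodule x : Set E) =
      {φ | Tendsto (fun p : ℕ × ℕ => dist ⟪x p.1, φ⟫ ⟪x p.2, φ⟫) atTop (𝓝 0)} := by
    ext φ
    exact (cauchy_map_iff_exists_tendsto.symm).trans cauchySeq_iff_tendsto_dist_atTop_0
  rw [hcarrier]
  refine Equicontinuous.isClosed_setOfPred_tendsto (f := fun _ => 0) ?_ continuous_const
  refine (LipschitzWith.uniformEquicontinuous _ (2 * C).toNNReal fun p => ?_).equicontinuous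
  refine LipschitzWith.of_dist_le_mul fun φ ψ => ?_
  calc dist (dist ⟪x p.1, φ⟫ ⟪x p.2, φ⟫) (dist ⟪x p.1, ψ⟫ ⟪x p.2, ψ⟫)
      ≤ dist ⟪x p.1, φ⟫ ⟪x p.1, ψ⟫ + dist ⟪x p.2, φ⟫ ⟪x p.2, ψ⟫ := dist_dist_dist_le _ _ _ _
    _ ≤ C * dist φ ψ + C * dist φ ψ :=
        add_le_add (dist_inner_le_of_norm_le (hC _) _ _) (dist_inner_le_of_norm_le (hC _) _ _)
    _ = 2 * C * dist φ ψ := by ring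
    _ ≤ (2 * C).toNNReal * dist φ ψ :=
        mul_le_mul_of_nonneg_right (Real.le_coe_toNNReal _) dist_nonneg

lemma mem_orthogonal_orthogonal_of_tendsto_inner {K : Submodule ℝ E} {x : ℕ → E} {g : E}
    (hx : ∀ N, x N ∈ K) (hg : ∀ φ, Tendsto (fun N => ⟪x N, φ⟫) atTop (𝓝 ⟪g, φ⟫)) :
    g ∈ Kᗮᗮ :=
  (Submodule.mem_orthogonal _ g).2 fun u hu => by
    rw [real_inner_comm]
    exact tendsto_nhds_unique (hg u) (tendsto_const_nhds.congr fun N =>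
      ((Submodule.mem_orthogonal K u).1 hu _ (hx N)).symm)

theorem eq_of_tendsto_inner_of_mem_span {s : Set E} {x x' : ℕ → E} {g g' : E}
    (hx : ∀ N, x N ∈ Submodule.span ℝ s) (hx' : ∀ N, x' N ∈ Submodule.span ℝ s)
    (hg : ∀ φ, Tendsto (fun N => ⟪x N, φ⟫) atTop (𝓝 ⟪g, φ⟫))
    (hg' : ∀ φ, Tendsto (fun N => ⟪x' N, φ⟫) atTop (𝓝 ⟪g', φ⟫))
    (h : ∀ v ∈ s, ⟪g, v⟫ = ⟪g', v⟫) : g = g' := by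
  set K := Submodule.span ℝ s
  have hperp : g - g' ∈ Kᗮ := by
    have hK : K ≤ (ℝ ∙ (g - g'))ᗮ := Submodule.span_le.2 fun v hv =>
      Submodule.mem_orthogonal_singleton_iff_inner_right.2 <| by
        rw [inner_sub_left, h v hv, sub_self]
    exact (Submodule.mem_orthogonal' K _).2 fun u hu =>
      Submodule.mem_orthogonal_singleton_iff_inner_right.1 (hK hu)
  have hclos : g - g' ∈ Kᗮᗮ := sub_mem (mem_orthogonal_orthogonal_of_tendsto_inner hx hg)
    (mem_orthogonal_orthogonal_of_tendsto_inner hx' hg')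
  have hzero : g - g' ∈ Kᗮ ⊓ Kᗮᗮ := ⟨hperp, hclos⟩
  rwa [Kᗮ.inf_orthogonal_eq_bot, Submodule.mem_bot, sub_eq_zero] at hzero

variable [CompleteSpace E]

theorem exists_tendsto_inner_of_mem_span {s : Set E} {x : ℕ → E} {C : ℝ}
    (hx : ∀ N, x N ∈ Submodule.span ℝ s) (hC : ∀ N, ‖x N‖ ≤ C)
    (hs : ∀ v ∈ s, ∃ l, Tendsto (fun N => ⟪x N, v⟫) atTop (𝓝 l)) :
    ∃ g : E, ∀ φ, Tendsto (fun N => ⟪x N, φ⟫) atTop (𝓝 ⟪g, φ⟫) := by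
  set H := (Submodule.span ℝ s).topologicalClosure
  have hH : H ≤ innerConvergentSubmodule x :=
    Submodule.topologicalClosure_minimal _ (Submodule.span_le.2 hs)
      (isClosed_innerConvergentSubmodule hC)
  have hHperp : Hᗮ ≤ innerConvergentSubmodule x := fun v hv =>
    ⟨0, tendsto_const_nhds.congr fun N =>
      ((Submodule.mem_orthogonal H v).1 hv _
        ((Submodule.span ℝ s).le_topologicalClosure (hx N))).symm⟩
  have hall : ∀ φ, φ ∈ innerConvergentSubmodule x := by
    rw [← Submodule.eq_top_iff', eq_top_iff, ← H.sup_orthogonal_of_hasOrthogonalProjection]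
    exact sup_le hH hHperp
  choose L hL using hall
  let T := continuousLinearMapOfTendsto (fun N => innerSL ℝ (x N)) (tendsto_pi_nhds.2 hL)
  exact ⟨(InnerProductSpace.toDual ℝ E).symm T, fun φ => by
    rw [InnerProductSpace.toDual_symm_apply]; exact hL φ⟩

end Hilbert

section Measure
variable {α : Type*} [MeasurableSpace α] {μ : Measure α}

def WeakStarTendsto (μ : Measure α) (x : ℕ → α → ℝ) (g : α → ℝ) : Prop :=
  ∀ φ : α → ℝ, Integrable φ μ →
    Tendsto (fun N => ∫ y, x N y * φ y ∂μ) atTop (𝓝 (∫ y, g y * φ y ∂μ))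

lemma WeakStarTendsto.congr_ae {x : ℕ → α → ℝ} {g g' : α → ℝ} (h : WeakStarTendsto μ x g)
    (hg : g =ᵐ[μ] g') : WeakStarTendsto μ x g' := fun φ hφ => by
  convert h φ hφ using 2
  exact integral_congr_ae (hg.mono fun y hy => by simp only [hy])

lemma lipschitzWith_integral_mul_L1 {z : α → ℝ} {K : ℝ} (hz : AEStronglyMeasurable z μ)
    (hzK : ∀ᵐ y ∂μ, |z y| ≤ K) :
    LipschitzWith K.toNNReal (fun f : α →₁[μ] ℝ => ∫ y, z y * f y ∂μ) := by
  have hzK' : ∀ᵐ y ∂μ, ‖z y‖ ≤ K := by simpa only [Real.norm_eq_abs] using hzK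
  have hint : ∀ f : α →₁[μ] ℝ, Integrable (fun y => z y * f y) μ := fun f =>
    (L1.integrable_coeFn f).bdd_mul hz hzK'
  refine LipschitzWith.of_dist_le_mul fun f g => ?_
  rw [dist_eq_norm, ← integral_sub (hint f) (hint g), dist_eq_norm, L1.norm_eq_integral_norm,
    ← integral_const_mul]
  refine norm_integral_le_of_norm_le ((L1.integrable_coeFn (f - g)).norm.const_mul _) ?_
  filter_upwards [Lp.coeFn_sub f g, hzK'] with y hy hzy
  rw [hy, Pi.sub_apply, ← mul_sub, norm_mul, Real.coe_toNNReal']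
  exact mul_le_mul_of_nonneg_right (hzy.trans (le_max_left _ _)) (norm_nonneg _)

theorem weakStarTendsto_of_tendsto_setIntegral {x : ℕ → α → ℝ} {g : α → ℝ} {K : ℝ}
    (hxm : ∀ N, AEStronglyMeasurable (x N) μ) (hxK : ∀ N, ∀ᵐ y ∂μ, |x N y| ≤ K)
    (hgm : AEStronglyMeasurable g μ) (hgK : ∀ᵐ y ∂μ, |g y| ≤ K)
    (h : ∀ s, MeasurableSet s → μ s < ∞ →
      Tendsto (fun N => ∫ y in s, x N y ∂μ) atTop (𝓝 (∫ y in s, g y ∂μ))) :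
    WeakStarTendsto μ x g := by
  have hint : ∀ {z : α → ℝ} {φ : α → ℝ}, AEStronglyMeasurable z μ → (∀ᵐ y ∂μ, |z y| ≤ K) →
      Integrable φ μ → Integrable (fun y => z y * φ y) μ := fun hz hzK hφ =>
    hφ.bdd_mul hz (by simpa only [Real.norm_eq_abs] using hzK)
  intro φ hφ
  refine Integrable.induction (fun φ => Tendsto (fun N => ∫ y, x N y * φ y ∂μ) atTop
    (𝓝 (∫ y, g y * φ y ∂μ))) ?_ ?_ ?_ ?_ hφ
  · intro c s hs hμs
    simp only [← Set.indicator_mul_right, integral_indicator hs, integral_mul_const]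
    exact (h s hs hμs).mul_const c
  · intro _ _ _ hφ hψ hφx hψx
    simp only [Pi.add_apply, mul_add]
    rw [integral_add (hint hgm hgK hφ) (hint hgm hgK hψ)]
    simpa only [integral_add (hint (hxm _) (hxK _) hφ) (hint (hxm _) (hxK _) hψ)]
      using hφx.add hψx
  · refine Equicontinuous.isClosed_setOfPred_tendsto ?_
      (lipschitzWith_integral_mul_L1 hgm hgK).continuous
    exact (LipschitzWith.uniformEquicontinuous _ K.toNNReal fun N =>
      lipschitzWith_integral_mul_L1 (hxm N) (hxK N)).equicontinuous
  · intro φ ψ hφψ _ hφx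
    have hcongr : ∀ z : α → ℝ, ∫ y, z y * φ y ∂μ = ∫ y, z y * ψ y ∂μ := fun z =>
      integral_congr_ae (hφψ.mono fun y hy => by simp only [hy])
    simpa only [hcongr] using hφx

lemma exists_mem_span_toLp_ae_eq {p : ℝ≥0∞} [Fact (1 ≤ p)] {ι : Type*} {v : ι → α → ℝ}
    (hv : ∀ i, MemLp (v i) p μ) {f : α → ℝ} (hf : f ∈ Submodule.span ℝ (Set.range v)) :
    ∃ F ∈ Submodule.span ℝ (Set.range fun i => (hv i).toLp), ⇑F =ᵐ[μ] f := by
  induction hf using Submodule.span_induction with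
  | mem f hf =>
    obtain ⟨i, rfl⟩ := hf
    exact ⟨_, Submodule.subset_span ⟨i, rfl⟩, (hv i).coeFn_toLp⟩
  | zero => exact ⟨0, zero_mem _, Lp.coeFn_zero _ _ _⟩
  | add f g _ _ hf hg =>
    obtain ⟨F, hF, hFf⟩ := hf
    obtain ⟨G, hG, hGg⟩ := hg
    exact ⟨F + G, add_mem hF hG, (Lp.coeFn_add F G).trans (hFf.add hGg)⟩
  | smul c f _ hf =>
    obtain ⟨F, hF, hFf⟩ := hf
    exact ⟨c • F, Submodule.smul_mem _ c hF, (Lp.coeFn_smul c F).trans (hFf.const_smul c)⟩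

lemma L2.inner_eq_integral_mul_of_ae_eq {F G : Lp ℝ 2 μ} {f g : α → ℝ} (hF : ⇑F =ᵐ[μ] f)
    (hG : ⇑G =ᵐ[μ] g) : ⟪F, G⟫ = ∫ y, f y * g y ∂μ := by
  rw [L2.inner_def]
  refine integral_congr_ae ?_
  filter_upwards [hF, hG] with y hFy hGy
  simp [hFy, hGy, mul_comm]

lemma Measurable.exists_abs_le_ae_eq {f : α → ℝ} (hf : Measurable f) {K : ℝ} (hK : 0 ≤ K)
    (hfK : ∀ᵐ y ∂μ, |f y| ≤ K) : ∃ g : α → ℝ, Measurable g ∧ (∀ y, |g y| ≤ K) ∧ g =ᵐ[μ] f := by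
  refine ⟨{y | |f y| ≤ K}.indicator f, hf.indicator (measurableSet_le hf.abs measurable_const),
    fun y => ?_, ?_⟩
  · simp only [Set.indicator_apply, Set.mem_ofPred_eq]
    split_ifs with hy
    exacts [hy, by rwa [abs_zero]]
  · filter_upwards [hfK] with y hy
    simp only [Set.indicator_apply, Set.mem_ofPred_eq, if_pos hy]

variable [IsFiniteMeasure μ]

lemma ae_abs_le_of_tendsto_setIntegral {x : ℕ → α → ℝ} {g : α → ℝ} {K : ℝ}
    (hx : ∀ N, Integrable (x N) μ) (hxK : ∀ N, ∀ᵐ y ∂μ, |x N y| ≤ K) (hg : Integrable g μ)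
    (h : ∀ s, MeasurableSet s →
      Tendsto (fun N => ∫ y in s, x N y ∂μ) atTop (𝓝 (∫ y in s, g y ∂μ))) :
    ∀ᵐ y ∂μ, |g y| ≤ K := by
  have hle : g ≤ᵐ[μ] fun _ => K :=
    ae_le_of_forall_setIntegral_le hg (integrable_const K) fun s hs _ =>
      le_of_tendsto' (h s hs) fun N => setIntegral_mono_ae (hx N).integrableOn
        (integrable_const K).integrableOn ((hxK N).mono fun y hy => (abs_le.1 hy).2)
  have hge : (fun _ => -K) ≤ᵐ[μ] g :=
    ae_le_of_forall_setIntegral_le (integrable_const (-K)) hg fun s hs _ =>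
      ge_of_tendsto' (h s hs) fun N => setIntegral_mono_ae (integrable_const (-K)).integrableOn
        (hx N).integrableOn ((hxK N).mono fun y hy => (abs_le.1 hy).1)
  filter_upwards [hle, hge] with y h₁ h₂
  exact abs_le.2 ⟨h₂, h₁⟩

lemma tendsto_setIntegral_of_tendsto_inner {X : ℕ → Lp ℝ 2 μ} {G : Lp ℝ 2 μ}
    (hG : ∀ φ, Tendsto (fun N => ⟪X N, φ⟫) atTop (𝓝 ⟪G, φ⟫)) {s : Set α} (hs : MeasurableSet s) :
    Tendsto (fun N => ∫ y in s, X N y ∂μ) atTop (𝓝 (∫ y in s, G y ∂μ)) := by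
  have hinner : ∀ F : Lp ℝ 2 μ, ⟪F, indicatorConstLp 2 hs (measure_ne_top μ s) 1⟫ =
      ∫ y in s, F y ∂μ := fun F => by rw [real_inner_comm, L2.inner_indicatorConstLp_one]
  simpa only [hinner] using hG (indicatorConstLp 2 hs (measure_ne_top μ s) 1)

lemma WeakStarTendsto.tendsto_inner {x : ℕ → α → ℝ} {g : α → ℝ} {X : ℕ → Lp ℝ 2 μ}
    (h : WeakStarTendsto μ x g) (hX : ∀ N, ⇑(X N) =ᵐ[μ] x N) (hg : MemLp g 2 μ) (φ : Lp ℝ 2 μ) :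
    Tendsto (fun N => ⟪X N, φ⟫) atTop (𝓝 ⟪hg.toLp g, φ⟫) := by
  simpa only [L2.inner_eq_integral_mul_of_ae_eq (hX _) (ae_eq_refl φ),
    L2.inner_eq_integral_mul_of_ae_eq hg.coeFn_toLp (ae_eq_refl φ)]
    using h φ ((Lp.memLp φ).integrable one_le_two)

theorem exists_weakStarTendsto_of_tendsto_integral_mul {ι : Type*} {v : ι → α → ℝ}
    (hv : ∀ i, MemLp (v i) 2 μ) {x : ℕ → α → ℝ} (hx : ∀ N, x N ∈ Submodule.span ℝ (Set.range v))
    {K : ℝ} (hK : 0 ≤ K) (hxK : ∀ N, ∀ᵐ y ∂μ, |x N y| ≤ K)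
    (hlim : ∀ i, ∃ l, Tendsto (fun N => ∫ y, x N y * v i y ∂μ) atTop (𝓝 l)) :
    ∃ g : α → ℝ, Measurable g ∧ (∀ y, |g y| ≤ K) ∧ WeakStarTendsto μ x g := by
  choose X hXspan hXx using fun N => exists_mem_span_toLp_ae_eq hv (hx N)
  have hXK : ∀ N, ‖X N‖ ≤ (measureUnivNNReal μ : ℝ) ^ (2 : ℝ≥0∞).toReal⁻¹ * K := fun N =>
    Lp.norm_le_of_ae_bound hK <| by
      filter_upwards [hXx N, hxK N] with y hXy hxy
      rwa [Real.norm_eq_abs, hXy]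
  obtain ⟨G, hG⟩ := exists_tendsto_inner_of_mem_span hXspan hXK <| by
    rintro _ ⟨i, rfl⟩
    simpa only [L2.inner_eq_integral_mul_of_ae_eq (hXx _) (hv i).coeFn_toLp] using hlim i
  have hset : ∀ s, MeasurableSet s →
      Tendsto (fun N => ∫ y in s, x N y ∂μ) atTop (𝓝 (∫ y in s, G y ∂μ)) := fun s hs => by
    simpa only [integral_congr_ae (ae_restrict_of_ae (hXx _))] using
      tendsto_setIntegral_of_tendsto_inner hG hs
  have hxi : ∀ N, Integrable (x N) μ := fun N =>
    ((Lp.memLp (X N)).integrable one_le_two).congr (hXx N)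
  obtain ⟨g, hgm, hgK, hgG⟩ := (Lp.stronglyMeasurable G).measurable.exists_abs_le_ae_eq hK
    (ae_abs_le_of_tendsto_setIntegral hxi hxK ((Lp.memLp G).integrable one_le_two) hset)
  refine ⟨g, hgm, hgK, weakStarTendsto_of_tendsto_setIntegral (fun N => (hxi N).1) hxK
    hgm.aestronglyMeasurable (ae_of_all _ hgK) fun s hs _ => ?_⟩
  simpa only [setIntegral_congr_ae hs (hgG.mono fun y hy _ => hy.symm)] using hset s hs

theorem ae_eq_of_weakStarTendsto {ι : Type*} {v : ι → α → ℝ} (hv : ∀ i, MemLp (v i) 2 μ)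
    {x x' : ℕ → α → ℝ} (hx : ∀ N, x N ∈ Submodule.span ℝ (Set.range v))
    (hx' : ∀ N, x' N ∈ Submodule.span ℝ (Set.range v)) {g g' : α → ℝ} (hg : MemLp g 2 μ)
    (hg' : MemLp g' 2 μ) (h : WeakStarTendsto μ x g) (h' : WeakStarTendsto μ x' g')
    (heq : ∀ i, ∫ y, g y * v i y ∂μ = ∫ y, g' y * v i y ∂μ) : g =ᵐ[μ] g' := by
  choose X hXspan hXx using fun N => exists_mem_span_toLp_ae_eq hv (hx N)
  choose X' hX'span hX'x using fun N => exists_mem_span_toLp_ae_eq hv (hx' N)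
  rw [← hg.toLp_eq_toLp_iff hg']
  refine eq_of_tendsto_inner_of_mem_span hXspan hX'span (h.tendsto_inner hXx hg)
    (h'.tendsto_inner hX'x hg') ?_
  rintro _ ⟨i, rfl⟩
  simpa only [L2.inner_eq_integral_mul_of_ae_eq (MemLp.coeFn_toLp _) (hv i).coeFn_toLp] using heq i

end Measure

section Weights
variable {α : Type*} {w : ℝ → ℝ} {g : ℕ → α → ℝ}

lemma IsWeight.nonneg_of_mem_Icc (hw : IsWeight w) {N n : ℕ} (hn : n ∈ Finset.Icc 1 N) :
    0 ≤ w ((n : ℝ) / (N : ℝ)) := by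
  obtain ⟨-, hnN⟩ := Finset.mem_Icc.1 hn
  exact hw.2.1 _ ⟨by positivity, div_le_one_of_le₀ (by exact_mod_cast hnN) (by positivity)⟩

lemma IsWeight.wsum_nonneg (hw : IsWeight w) (N : ℕ) : 0 ≤ wsum w N :=
  Finset.sum_nonneg fun _ => hw.nonneg_of_mem_Icc

lemma isWeight_one : IsWeight fun _ => 1 :=
  ⟨contDiffOn_const, fun _ _ => zero_le_one, by simp⟩

/-- The average `B_N` of the paper. -/
def weightedAvg (w : ℝ → ℝ) (g : ℕ → α → ℝ) (N : ℕ) (y : α) : ℝ :=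
  (wsum w N)⁻¹ * ∑ n ∈ Finset.Icc 1 N, w ((n : ℝ) / (N : ℝ)) * g n y

lemma abs_weightedAvg_le (hw : IsWeight w) {K : ℝ} (hK : 0 ≤ K) {y : α}
    (hgK : ∀ n, |g n y| ≤ K) (N : ℕ) : |weightedAvg w g N y| ≤ K := by
  have hsum : |∑ n ∈ Finset.Icc 1 N, w ((n : ℝ) / (N : ℝ)) * g n y| ≤ wsum w N * K :=
    calc |∑ n ∈ Finset.Icc 1 N, w ((n : ℝ) / (N : ℝ)) * g n y|
        ≤ ∑ n ∈ Finset.Icc 1 N, |w ((n : ℝ) / (N : ℝ)) * g n y| := Finset.abs_sum_le_sum_abs _ _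
      _ ≤ ∑ n ∈ Finset.Icc 1 N, w ((n : ℝ) / (N : ℝ)) * K := Finset.sum_le_sum fun n hn => by
          rw [abs_mul, abs_of_nonneg (hw.nonneg_of_mem_Icc hn)]
          exact mul_le_mul_of_nonneg_left (hgK n) (hw.nonneg_of_mem_Icc hn)
      _ = wsum w N * K := by rw [wsum, Finset.sum_mul]
  rw [weightedAvg, abs_mul, abs_inv, abs_of_nonneg (hw.wsum_nonneg N)]
  rcases (hw.wsum_nonneg N).eq_or_lt with h0 | h0
  · simp [← h0, hK]
  · rwa [inv_mul_le_iff₀ h0]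

lemma weightedAvg_mem_span (w : ℝ → ℝ) (g : ℕ → α → ℝ) (N : ℕ) :
    weightedAvg w g N ∈ Submodule.span ℝ (Set.range fun n : Set.Ici 1 => g n) := by
  have hsmul : weightedAvg w g N =
      (wsum w N)⁻¹ • ∑ n ∈ Finset.Icc 1 N, w ((n : ℝ) / (N : ℝ)) • g n := by
    ext y
    simp [weightedAvg, Finset.sum_apply]
  rw [hsmul]
  exact Submodule.smul_mem _ _ (Submodule.sum_mem _ fun n hn => Submodule.smul_mem _ _
    (Submodule.subset_span ⟨⟨n, (Finset.mem_Icc.1 hn).1⟩, rfl⟩))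

variable [MeasurableSpace α] {μ : Measure α}

def weightedCorrelation (μ : Measure α) (w : ℝ → ℝ) (g : ℕ → α → ℝ) (m N : ℕ) : ℝ :=
  (wsum w N)⁻¹ * ∑ n ∈ Finset.Icc 1 N, w ((n : ℝ) / (N : ℝ)) * ∫ y, g n y * g m y ∂μ

variable [IsFiniteMeasure μ] {K : ℝ}

lemma memLp_of_abs_le (hgm : ∀ n, Measurable (g n)) (hgK : ∀ n y, |g n y| ≤ K) (p : ℝ≥0∞)
    (n : ℕ) : MemLp (g n) p μ :=
  MemLp.of_bound (hgm n).aestronglyMeasurable K (ae_of_all _ (hgK n))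

lemma weightedCorrelation_eq_integral (hgm : ∀ n, Measurable (g n)) (hgK : ∀ n y, |g n y| ≤ K)
    (m : ℕ) : weightedCorrelation μ w g m = fun N => ∫ y, weightedAvg w g N y * g m y ∂μ := by
  have hint : ∀ n, Integrable (fun y => g n y * g m y) μ := fun n =>
    ((memLp_of_abs_le hgm hgK 1 m).integrable le_rfl).bdd_mul (hgm n).aestronglyMeasurable
      (ae_of_all _ (hgK n))
  ext N
  simp only [weightedCorrelation, weightedAvg, mul_assoc, Finset.sum_mul]
  rw [integral_const_mul, integral_finsetSum _ fun n _ => (hint n).const_mul _]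
  simp only [integral_const_mul]

theorem WeakStarTendsto.tendsto_weightedCorrelation (hgm : ∀ n, Measurable (g n))
    (hgK : ∀ n y, |g n y| ≤ K) {bbar : α → ℝ} (h : WeakStarTendsto μ (weightedAvg w g) bbar)
    (m : ℕ) : Tendsto (weightedCorrelation μ w g m) atTop (𝓝 (∫ y, bbar y * g m y ∂μ)) := by
  rw [weightedCorrelation_eq_integral hgm hgK]
  exact h (g m) ((memLp_of_abs_le hgm hgK 1 m).integrable le_rfl)

theorem exists_weakStarTendsto_weightedAvg (hw : IsWeight w) (hgm : ∀ n, Measurable (g n))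
    (hK : 0 ≤ K) (hgK : ∀ n y, |g n y| ≤ K)
    (hlim : ∀ m, 1 ≤ m → ∃ l, Tendsto (weightedCorrelation μ w g m) atTop (𝓝 l)) :
    ∃ bbar : α → ℝ, Measurable bbar ∧ (∀ y, |bbar y| ≤ K) ∧
      WeakStarTendsto μ (weightedAvg w g) bbar := by
  have hv : ∀ n : Set.Ici 1, MemLp (g n) 2 μ := fun n => memLp_of_abs_le hgm hgK 2 n
  refine exists_weakStarTendsto_of_tendsto_integral_mul hv (weightedAvg_mem_span w g) hK
    (fun N => ae_of_all _ fun y => abs_weightedAvg_le hw hK (fun n => hgK n y) N) fun m => ?_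
  simpa only [← weightedCorrelation_eq_integral hgm hgK] using hlim m m.2

theorem ae_eq_of_weakStarTendsto_weightedAvg (hgm : ∀ n, Measurable (g n))
    (hgK : ∀ n y, |g n y| ≤ K) {w' : ℝ → ℝ} {bbar bbar' : α → ℝ} (hb : MemLp bbar 2 μ)
    (hb' : MemLp bbar' 2 μ) (h : WeakStarTendsto μ (weightedAvg w g) bbar)
    (h' : WeakStarTendsto μ (weightedAvg w' g) bbar') {ℓ : ℕ → ℝ}
    (hℓ : ∀ m, 1 ≤ m → Tendsto (weightedCorrelation μ w g m) atTop (𝓝 (ℓ m)))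
    (hℓ' : ∀ m, 1 ≤ m → Tendsto (weightedCorrelation μ w' g m) atTop (𝓝 (ℓ m))) :
    bbar =ᵐ[μ] bbar' := by
  have hv : ∀ n : Set.Ici 1, MemLp (g n) 2 μ := fun n => memLp_of_abs_le hgm hgK 2 n
  exact ae_eq_of_weakStarTendsto hv (weightedAvg_mem_span w g) (weightedAvg_mem_span w' g)
    hb hb' h h' fun m =>
      (tendsto_nhds_unique (h.tendsto_weightedCorrelation hgm hgK m) (hℓ m m.2)).trans
        (tendsto_nhds_unique (h'.tendsto_weightedCorrelation hgm hgK m) (hℓ' m m.2)).symm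

end Weights

theorem stmt1_general {M D : ℕ} (Q : Set (Fin M → ℝ))
    (hQfin : volume Q < ⊤)
    (U : ℕ → (Fin M → ℝ) → EuclideanSpace ℝ (Fin D)) (hU : ∀ n, Measurable (U n))
    (b : EuclideanSpace ℝ (Fin D) → ℝ) (hb : Continuous b) (hbc : HasCompactSupport b) :
    (∀ w : ℝ → ℝ, IsWeight w →
      ((∀ m : ℕ, 1 ≤ m → ∃ l : ℝ,
          Tendsto (fun N => (wsum w N)⁻¹ *
              ∑ n ∈ Finset.Icc 1 N, w ((n : ℝ) / (N : ℝ)) * ∫ y in Q, b (U n y) * b (U m y))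
            atTop (𝓝 l)) ↔
        (∃ bbar : (Fin M → ℝ) → ℝ, Measurable bbar ∧ (∃ C : ℝ, ∀ y, |bbar y| ≤ C) ∧
          ∀ φ : (Fin M → ℝ) → ℝ, Integrable φ (volume.restrict Q) →
            Tendsto (fun N => ∫ y in Q,
                ((wsum w N)⁻¹ * ∑ n ∈ Finset.Icc 1 N, w ((n : ℝ) / (N : ℝ)) * b (U n y)) * φ y)
              atTop (𝓝 (∫ y in Q, bbar y * φ y)))))
    ∧
    ((∃ ℓ : ℕ → ℝ, ∀ w : ℝ → ℝ, IsWeight w → ∀ m : ℕ, 1 ≤ m →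
        Tendsto (fun N => (wsum w N)⁻¹ *
            ∑ n ∈ Finset.Icc 1 N, w ((n : ℝ) / (N : ℝ)) * ∫ y in Q, b (U n y) * b (U m y))
          atTop (𝓝 (ℓ m))) →
      ∃ bbar : (Fin M → ℝ) → ℝ, Measurable bbar ∧ (∃ C : ℝ, ∀ y, |bbar y| ≤ C) ∧
        ∀ w : ℝ → ℝ, IsWeight w →
          ∀ φ : (Fin M → ℝ) → ℝ, Integrable φ (volume.restrict Q) →
            Tendsto (fun N => ∫ y in Q,
                ((wsum w N)⁻¹ * ∑ n ∈ Finset.Icc 1 N, w ((n : ℝ) / (N : ℝ)) * b (U n y)) * φ y)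
              atTop (𝓝 (∫ y in Q, bbar y * φ y))) := by
  have : IsFiniteMeasure (volume.restrict Q) := isFiniteMeasure_restrict.2 hQfin.ne
  obtain ⟨K, hK⟩ := hbc.exists_bound_of_continuous hb
  have hK0 : 0 ≤ K := (norm_nonneg _).trans (hK 0)
  set g : ℕ → (Fin M → ℝ) → ℝ := fun n y => b (U n y)
  have hgm : ∀ n, Measurable (g n) := fun n => hb.measurable.comp (hU n)
  have hgK : ∀ n y, |g n y| ≤ K := fun n y => hK (U n y)
  have hmemLp : ∀ {bbar}, Measurable bbar → (∀ y, |bbar y| ≤ K) →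
      MemLp bbar 2 (volume.restrict Q) := fun hbm hbK =>
    MemLp.of_bound hbm.aestronglyMeasurable K (ae_of_all _ hbK)
  refine ⟨fun w hw => ⟨fun hlim => ?_, fun ⟨bbar, _, _, hbar⟩ m _ =>
    ⟨_, WeakStarTendsto.tendsto_weightedCorrelation hgm hgK hbar m⟩⟩, fun ⟨ℓ, hℓ⟩ => ?_⟩
  · obtain ⟨bbar, hbm, hbK, hbar⟩ := exists_weakStarTendsto_weightedAvg hw hgm hK0 hgK hlim
    exact ⟨bbar, hbm, ⟨K, hbK⟩, hbar⟩
  · obtain ⟨bbar, hbm, hbK, hbar⟩ := exists_weakStarTendsto_weightedAvg isWeight_one hgm hK0 hgK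
      fun m hm => ⟨ℓ m, hℓ _ isWeight_one m hm⟩
    refine ⟨bbar, hbm, ⟨K, hbK⟩, fun w hw => ?_⟩
    obtain ⟨bbar', hbm', hbK', hbar'⟩ := exists_weakStarTendsto_weightedAvg hw hgm hK0 hgK
      fun m hm => ⟨ℓ m, hℓ w hw m hm⟩
    exact WeakStarTendsto.congr_ae hbar' <| ae_eq_of_weakStarTendsto_weightedAvg hgm hgK
      (hmemLp hbm' hbK') (hmemLp hbm hbK) hbar' hbar (hℓ w hw) (hℓ _ isWeight_one)

/-- Lemma 2.1: for fixed `b ∈ C_c(ℝ^D)` and `w ∈ W`, existence of the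
weighted correlation limits for all `m` is equivalent to weak-* convergence in `L^∞(Q)` of
`B_N = (1/w_N) ∑_{n=1}^N w(n/N) b(U_n)`; moreover, if the correlation limits exist for every
`w ∈ W` and are independent of `w`, then the weak-* limit is the same for every `w ∈ W`. -/
theorem stmt1 {M D : ℕ} (Q : Set (Fin M → ℝ)) (hQm : MeasurableSet Q)
    (hQfin : volume Q < ⊤)
    (U : ℕ → (Fin M → ℝ) → EuclideanSpace ℝ (Fin D)) (hU : ∀ n, Measurable (U n))
    (b : EuclideanSpace ℝ (Fin D) → ℝ) (hb : Continuous b) (hbc : HasCompactSupport b) :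
    (∀ w : ℝ → ℝ, IsWeight w →
      ((∀ m : ℕ, 1 ≤ m → ∃ l : ℝ,
          Tendsto (fun N => (wsum w N)⁻¹ *
              ∑ n ∈ Finset.Icc 1 N, w ((n : ℝ) / (N : ℝ)) * ∫ y in Q, b (U n y) * b (U m y))
            atTop (𝓝 l)) ↔
        (∃ bbar : (Fin M → ℝ) → ℝ, Measurable bbar ∧ (∃ C : ℝ, ∀ y, |bbar y| ≤ C) ∧
          ∀ φ : (Fin M → ℝ) → ℝ, Integrable φ (volume.restrict Q) →
            Tendsto (fun N => ∫ y in Q,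
                ((wsum w N)⁻¹ * ∑ n ∈ Finset.Icc 1 N, w ((n : ℝ) / (N : ℝ)) * b (U n y)) * φ y)
              atTop (𝓝 (∫ y in Q, bbar y * φ y)))))
    ∧
    ((∃ ℓ : ℕ → ℝ, ∀ w : ℝ → ℝ, IsWeight w → ∀ m : ℕ, 1 ≤ m →
        Tendsto (fun N => (wsum w N)⁻¹ *
            ∑ n ∈ Finset.Icc 1 N, w ((n : ℝ) / (N : ℝ)) * ∫ y in Q, b (U n y) * b (U m y))
          atTop (𝓝 (ℓ m))) →
      ∃ bbar : (Fin M → ℝ) → ℝ, Measurable bbar ∧ (∃ C : ℝ, ∀ y, |bbar y| ≤ C) ∧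
        ∀ w : ℝ → ℝ, IsWeight w →
          ∀ φ : (Fin M → ℝ) → ℝ, Integrable φ (volume.restrict Q) →
            Tendsto (fun N => ∫ y in Q,
                ((wsum w N)⁻¹ * ∑ n ∈ Finset.Icc 1 N, w ((n : ℝ) / (N : ℝ)) * b (U n y)) * φ y)
              atTop (𝓝 (∫ y in Q, bbar y * φ y))) :=
  stmt1_general Q hQfin U hU b hb hbc
end
end

section
/- The sequence (U_n)_{n≥1} is weakly (S)-convergent if and only if for every b ∈ C_c(ℝ^D) there exists \bar{b} ∈ L^∞(Q) such that (1/N) Σ_{n=1}^N b(U_n) → \bar{b} strongly in L¹(Q) as N → ∞. -/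
/-!
Write `w N` for the Cesàro means of `g n = b ∘ U n`, a uniformly bounded sequence in `L²(Q)`.
The integrals in the definition of weak (S)-convergence are inner products:
`(1/N) ∑ₙ ∫ gₙ gₘ = ⟪w N, g m⟫` and `(1/N²) ∑ₙₘ ∫ gₙ gₘ = ‖w N‖²`.
If `w N → b̄` in `L¹`, uniform boundedness makes all of these converge, with `ℓ m = ⟪b̄, g m⟫`
and `L = ‖b̄‖²`. Conversely, as `N → ∞`, `‖w N - w K‖²` tends to
`L - 2 (1/K) ∑_{m ≤ K} ℓ m + ‖w K‖²`, which tends to `0` as `K → ∞`; hence `(w N)` is Cauchy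
in `L²`, its limit is an `L¹` limit because `Q` has finite measure, and clamping the limit to
the uniform bound of the `w N` makes it bounded.
-/

open MeasureTheory Filter Topology

noncomputable section

/-- Weak (S)-convergence of a sequence `(U_n)_{n ≥ 1}` of measurable functions `Q → ℝ^D`:
for every `b ∈ C_c(ℝ^D)`, (i) the correlation limits
`ℓ m = lim_N (1/N) ∑_{n=1}^N ∫_Q b(U_n) b(U_m)` exist for every fixed `m ≥ 1`, and
(ii) `lim_N (1/N²) ∑_{n,m=1}^N ∫_Q b(U_n) b(U_m) = lim_M (1/M) ∑_{m=1}^M ℓ m`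
(both limits existing). -/
def WeaklySConv {M D : ℕ} (Q : Set (Fin M → ℝ))
    (U : ℕ → (Fin M → ℝ) → EuclideanSpace ℝ (Fin D)) : Prop :=
  ∀ b : EuclideanSpace ℝ (Fin D) → ℝ, Continuous b → HasCompactSupport b →
    ∃ ℓ : ℕ → ℝ,
      (∀ m : ℕ, 1 ≤ m →
        Tendsto (fun N : ℕ => (N : ℝ)⁻¹ *
            ∑ n ∈ Finset.Icc 1 N, ∫ y in Q, b (U n y) * b (U m y)) atTop (𝓝 (ℓ m))) ∧
      ∃ L : ℝ,
        Tendsto (fun N : ℕ => ((N : ℝ) ^ 2)⁻¹ *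
            ∑ n ∈ Finset.Icc 1 N, ∑ m ∈ Finset.Icc 1 N, ∫ y in Q, b (U n y) * b (U m y))
          atTop (𝓝 L) ∧
        Tendsto (fun K : ℕ => (K : ℝ)⁻¹ * ∑ m ∈ Finset.Icc 1 K, ℓ m) atTop (𝓝 L)

open scoped RealInnerProductSpace

theorem cauchySeq_of_forall_exists_eventually_dist_lt {X β : Type*} [PseudoMetricSpace X]
    [Nonempty β] [SemilatticeSup β] {u : β → X}
    (h : ∀ ε > 0, ∃ x, ∀ᶠ n in atTop, dist (u n) x < ε) : CauchySeq u := by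
  refine Metric.cauchySeq_iff.2 fun ε hε => ?_
  obtain ⟨x, hx⟩ := h (ε / 2) (half_pos hε)
  obtain ⟨N, hN⟩ := eventually_atTop.1 hx
  exact ⟨N, fun m hm n hn =>
    (dist_triangle_right _ _ x).trans_lt (by linarith [hN m hm, hN n hn])⟩

theorem cauchySeq_of_tendsto_norm_sq_of_tendsto_inner {E : Type*} [NormedAddCommGroup E]
    [InnerProductSpace ℝ E] {v : ℕ → E} {c : ℕ → ℝ} {L : ℝ}
    (hv : Tendsto (fun N => ‖v N‖ ^ 2) atTop (𝓝 L))
    (hvc : ∀ K, Tendsto (fun N => ⟪v N, v K⟫) atTop (𝓝 (c K)))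
    (hc : Tendsto c atTop (𝓝 L)) : CauchySeq v := by
  refine cauchySeq_of_forall_exists_eventually_dist_lt fun ε hε => ?_
  have hd : Tendsto (fun K => L - 2 * c K + ‖v K‖ ^ 2) atTop (𝓝 0) := by
    convert (tendsto_const_nhds.sub (hc.const_mul 2)).add hv using 2
    ring
  obtain ⟨K, hK⟩ := (hd.eventually (gt_mem_nhds (pow_pos hε 2))).exists
  have hN : Tendsto (fun N => ‖v N - v K‖ ^ 2) atTop (𝓝 (L - 2 * c K + ‖v K‖ ^ 2)) := by
    simp_rw [norm_sub_sq_real]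
    exact (hv.sub ((hvc K).const_mul 2)).add_const _
  refine ⟨v K, ?_⟩
  filter_upwards [hN.eventually (gt_mem_nhds hK)] with N hN
  rw [dist_eq_norm]
  exact lt_of_pow_lt_pow_left₀ 2 hε.le hN

theorem abs_max_min_sub_max_min_le (a b s t : ℝ) :
    |max a (min b s) - max a (min b t)| ≤ |s - t| :=
  calc |max a (min b s) - max a (min b t)|
      = |max (min b s) a - max (min b t) a| := by rw [max_comm a, max_comm a]
    _ ≤ |min b s - min b t| := abs_max_sub_max_le_abs _ _ _
    _ ≤ max |b - b| |s - t| := abs_min_sub_min_le_max _ _ _ _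
    _ = |s - t| := by simp

def cesaroMean {α : Type*} (g : ℕ → α → ℝ) (N : ℕ) (y : α) : ℝ :=
  (N : ℝ)⁻¹ * ∑ n ∈ Finset.Icc 1 N, g n y

/- For `μ = volume.restrict Q` and `g n = b ∘ U n`, the next two definitions unfold to the two
sides of the main theorem. -/
def HasCesaroCorrelationLimits {α : Type*} [MeasurableSpace α] (μ : Measure α)
    (g : ℕ → α → ℝ) : Prop :=
  ∃ ℓ : ℕ → ℝ,
    (∀ m : ℕ, 1 ≤ m →
      Tendsto (fun N : ℕ => (N : ℝ)⁻¹ * ∑ n ∈ Finset.Icc 1 N, ∫ y, g n y * g m y ∂μ)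
        atTop (𝓝 (ℓ m))) ∧
    ∃ L : ℝ,
      Tendsto (fun N : ℕ => ((N : ℝ) ^ 2)⁻¹ *
          ∑ n ∈ Finset.Icc 1 N, ∑ m ∈ Finset.Icc 1 N, ∫ y, g n y * g m y ∂μ) atTop (𝓝 L) ∧
      Tendsto (fun K : ℕ => (K : ℝ)⁻¹ * ∑ m ∈ Finset.Icc 1 K, ℓ m) atTop (𝓝 L)

def CesaroMeanTendstoInL1 {α : Type*} [MeasurableSpace α] (μ : Measure α)
    (g : ℕ → α → ℝ) : Prop :=
  ∃ gbar : α → ℝ, Measurable gbar ∧ (∃ C : ℝ, ∀ y, |gbar y| ≤ C) ∧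
    Tendsto (fun N => ∫ y, |cesaroMean g N y - gbar y| ∂μ) atTop (𝓝 0)

section Cesaro

variable {α : Type*} {g : ℕ → α → ℝ} {C : ℝ}

theorem abs_cesaroMean_le (hgC : ∀ n y, |g n y| ≤ C) (N : ℕ) (y : α) :
    |cesaroMean g N y| ≤ C := by
  have hC : 0 ≤ C := (abs_nonneg _).trans (hgC 0 y)
  calc |cesaroMean g N y| = (N : ℝ)⁻¹ * |∑ n ∈ Finset.Icc 1 N, g n y| := by
        rw [cesaroMean, abs_mul, abs_inv, Nat.abs_cast]
    _ ≤ (N : ℝ)⁻¹ * (N * C) := by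
        gcongr
        refine (Finset.abs_sum_le_sum_abs _ _).trans ?_
        simpa using Finset.sum_le_card_nsmul (Finset.Icc 1 N) _ C fun n _ => hgC n y
    _ ≤ C := by
        rcases N.eq_zero_or_pos with rfl | hN
        · simpa using hC
        · rw [inv_mul_cancel_left₀ (by positivity)]

variable [MeasurableSpace α] {μ : Measure α} [IsFiniteMeasure μ]

theorem measurable_cesaroMean (hg : ∀ n, Measurable (g n)) (N : ℕ) :
    Measurable (cesaroMean g N) :=
  measurable_const.mul (Finset.measurable_sum _ fun n _ => hg n)

theorem integrable_of_abs_le {f : α → ℝ} {K : ℝ} (hf : Measurable f)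
    (hfK : ∀ y, |f y| ≤ K) : Integrable f μ :=
  .of_bound hf.aestronglyMeasurable K (ae_of_all _ hfK)

theorem integrable_mul_of_abs_le {f h : α → ℝ} {A B : ℝ} (hf : Measurable f)
    (hh : Measurable h) (hfA : ∀ y, |f y| ≤ A) (hhB : ∀ y, |h y| ≤ B) :
    Integrable (fun y => f y * h y) μ :=
  integrable_of_abs_le (hf.mul hh) fun y => by
    rw [abs_mul]
    exact mul_le_mul (hfA y) (hhB y) (abs_nonneg _) ((abs_nonneg _).trans (hfA y))

variable {f : α → ℝ} {A : ℝ}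

theorem integral_cesaroMean_mul (hg : ∀ n, Measurable (g n)) (hgC : ∀ n y, |g n y| ≤ C)
    (hf : Measurable f) (hfA : ∀ y, |f y| ≤ A) (N : ℕ) :
    ∫ y, cesaroMean g N y * f y ∂μ = (N : ℝ)⁻¹ * ∑ n ∈ Finset.Icc 1 N, ∫ y, g n y * f y ∂μ := by
  simp only [cesaroMean, mul_assoc, Finset.sum_mul]
  rw [integral_const_mul,
    integral_finsetSum _ fun n _ => integrable_mul_of_abs_le (hg n) hf (hgC n) hfA]

theorem integral_mul_cesaroMean (hg : ∀ n, Measurable (g n)) (hgC : ∀ n y, |g n y| ≤ C)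
    (hf : Measurable f) (hfA : ∀ y, |f y| ≤ A) (K : ℕ) :
    ∫ y, f y * cesaroMean g K y ∂μ = (K : ℝ)⁻¹ * ∑ m ∈ Finset.Icc 1 K, ∫ y, f y * g m y ∂μ := by
  simp only [cesaroMean, mul_left_comm (f _)]
  rw [integral_const_mul]
  congr 1
  simp only [Finset.mul_sum]
  exact integral_finsetSum _ fun m _ => integrable_mul_of_abs_le hf (hg m) hfA (hgC m)

theorem integral_cesaroMean_mul_cesaroMean (hg : ∀ n, Measurable (g n))
    (hgC : ∀ n y, |g n y| ≤ C) (N K : ℕ) :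
    ∫ y, cesaroMean g N y * cesaroMean g K y ∂μ = (N : ℝ)⁻¹ * (K : ℝ)⁻¹ *
      ∑ n ∈ Finset.Icc 1 N, ∑ m ∈ Finset.Icc 1 K, ∫ y, g n y * g m y ∂μ := by
  rw [integral_cesaroMean_mul hg hgC (measurable_cesaroMean hg K) (abs_cesaroMean_le hgC K),
    mul_assoc]
  congr 1
  rw [Finset.mul_sum]
  exact Finset.sum_congr rfl fun n _ => integral_mul_cesaroMean hg hgC (hg n) (hgC n) K

theorem tendsto_integral_mul_of_tendsto_integral_abs_sub {F H : ℕ → α → ℝ} {f h : α → ℝ}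
    {K : ℝ} (hF : ∀ N, Measurable (F N)) (hf : Measurable f) (hH : ∀ N, Measurable (H N))
    (hh : Measurable h) (hFK : ∀ N y, |F N y| ≤ K) (hfK : ∀ y, |f y| ≤ K)
    (hHK : ∀ N y, |H N y| ≤ K) (hhK : ∀ y, |h y| ≤ K)
    (hFf : Tendsto (fun N => ∫ y, |F N y - f y| ∂μ) atTop (𝓝 0))
    (hHh : Tendsto (fun N => ∫ y, |H N y - h y| ∂μ) atTop (𝓝 0)) :
    Tendsto (fun N => ∫ y, F N y * H N y ∂μ) atTop (𝓝 (∫ y, f y * h y ∂μ)) := by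
  have hint : ∀ {u v : α → ℝ}, Measurable u → Measurable v → (∀ y, |u y| ≤ K) →
      (∀ y, |v y| ≤ K) → Integrable (fun y => |u y - v y|) μ := fun hu hv huK hvK =>
    ((integrable_of_abs_le hu huK).sub (integrable_of_abs_le hv hvK)).abs
  have hbound : ∀ N, ‖∫ y, F N y * H N y ∂μ - ∫ y, f y * h y ∂μ‖
      ≤ K * ∫ y, |F N y - f y| ∂μ + K * ∫ y, |H N y - h y| ∂μ := fun N => by
    rw [Real.norm_eq_abs, ← integral_sub (integrable_mul_of_abs_le (hF N) (hH N) (hFK N) (hHK N))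
      (integrable_mul_of_abs_le hf hh hfK hhK), ← integral_const_mul, ← integral_const_mul,
      ← integral_add ((hint (hF N) hf (hFK N) hfK).const_mul K)
        ((hint (hH N) hh (hHK N) hhK).const_mul K)]
    refine abs_integral_le_integral_abs.trans (integral_mono_of_nonneg
      (ae_of_all _ fun y => abs_nonneg _) (((hint (hF N) hf (hFK N) hfK).const_mul K).add
        ((hint (hH N) hh (hHK N) hhK).const_mul K)) (ae_of_all _ fun y => ?_))
    calc |F N y * H N y - f y * h y| = |(F N y - f y) * H N y + f y * (H N y - h y)| := by
          ring_nf
      _ ≤ |F N y - f y| * |H N y| + |f y| * |H N y - h y| := by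
          rw [← abs_mul, ← abs_mul]; exact abs_add_le _ _
      _ ≤ K * |F N y - f y| + K * |H N y - h y| := by
          rw [mul_comm K]
          gcongr
          exacts [hHK N y, hfK y]
  rw [tendsto_iff_norm_sub_tendsto_zero]
  refine squeeze_zero (fun N => norm_nonneg _) hbound ?_
  simpa using (hFf.const_mul K).add (hHh.const_mul K)

theorem CesaroMeanTendstoInL1.hasCesaroCorrelationLimits (hg : ∀ n, Measurable (g n))
    (hgC : ∀ n y, |g n y| ≤ C) (h : CesaroMeanTendstoInL1 μ g) :
    HasCesaroCorrelationLimits μ g := by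
  obtain ⟨gbar, hgbar, ⟨A, hgbarA⟩, hlim⟩ := h
  have hw := measurable_cesaroMean hg
  have hgK : ∀ n y, |g n y| ≤ max C A := fun n y => (hgC n y).trans (le_max_left _ _)
  have hwK : ∀ N y, |cesaroMean g N y| ≤ max C A := abs_cesaroMean_le hgK
  have hgbarK : ∀ y, |gbar y| ≤ max C A := fun y => (hgbarA y).trans (le_max_right _ _)
  have hconst : ∀ f : α → ℝ, Tendsto (fun _ : ℕ => ∫ y, |f y - f y| ∂μ) atTop (𝓝 0) := by
    simp
  refine ⟨fun m => ∫ y, gbar y * g m y ∂μ, fun m _ => ?_, ∫ y, gbar y * gbar y ∂μ, ?_, ?_⟩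
  · refine (tendsto_integral_mul_of_tendsto_integral_abs_sub hw hgbar (fun _ => hg m) (hg m)
      hwK hgbarK (fun _ => hgK m) (hgK m) hlim (hconst _)).congr fun N => ?_
    exact integral_cesaroMean_mul hg hgC (hg m) (hgC m) N
  · refine (tendsto_integral_mul_of_tendsto_integral_abs_sub hw hgbar hw hgbar
      hwK hgbarK hwK hgbarK hlim hlim).congr fun N => ?_
    rw [integral_cesaroMean_mul_cesaroMean hg hgC, sq, mul_inv]
  · refine (tendsto_integral_mul_of_tendsto_integral_abs_sub (fun _ => hgbar) hgbar hw hgbar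
      (fun _ => hgbarK) hgbarK hwK hgbarK (hconst _) hlim).congr fun K => ?_
    exact integral_mul_cesaroMean hg hgC hgbar hgbarA K

theorem tendsto_integral_abs_sub_of_tendsto_toLp {F : ℕ → α → ℝ} (hF : ∀ N, MemLp (F N) 2 μ)
    {u : Lp ℝ 2 μ} (hFu : Tendsto (fun N => (hF N).toLp (F N)) atTop (𝓝 u)) :
    Tendsto (fun N => ∫ y, |F N y - u y| ∂μ) atTop (𝓝 0) := by
  have hasm : ∀ N, AEStronglyMeasurable (F N - ⇑u) μ := fun N =>
    (hF N).aestronglyMeasurable.sub (Lp.aestronglyMeasurable u)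
  have h2 : Tendsto (fun N => eLpNorm (F N - ⇑u) 2 μ) atTop (𝓝 0) :=
    ((Lp.tendsto_Lp_iff_tendsto_eLpNorm' _ u).1 hFu).congr fun N =>
      eLpNorm_congr_ae ((hF N).coeFn_toLp.sub EventuallyEq.rfl)
  have h1 : Tendsto (fun N => eLpNorm (F N - ⇑u) 1 μ) atTop (𝓝 0) := by
    refine tendsto_of_tendsto_of_tendsto_of_le_of_le tendsto_const_nhds ?_ (fun _ => zero_le)
      fun N => eLpNorm_le_eLpNorm_mul_rpow_measure_univ one_le_two (hasm N)
    simpa using ENNReal.Tendsto.mul_const h2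
      (.inr (ENNReal.rpow_ne_top_of_nonneg (by norm_num) (measure_ne_top μ _)))
  refine ((ENNReal.tendsto_toReal ENNReal.zero_ne_top).comp h1).congr fun N => ?_
  simp only [Function.comp_apply, eLpNorm_one_eq_lintegral_enorm]
  rw [← integral_norm_eq_lintegral_enorm (hasm N)]
  rfl

theorem exists_abs_le_tendsto_integral_abs_sub {F : ℕ → α → ℝ} {u : α → ℝ}
    (hF : ∀ N, Measurable (F N)) (hFC : ∀ N y, |F N y| ≤ C) (hu : Integrable u μ)
    (hFu : Tendsto (fun N => ∫ y, |F N y - u y| ∂μ) atTop (𝓝 0)) :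
    ∃ v : α → ℝ, Measurable v ∧ (∀ y, |v y| ≤ C) ∧
      Tendsto (fun N => ∫ y, |F N y - v y| ∂μ) atTop (𝓝 0) := by
  set u' := hu.aestronglyMeasurable.mk u
  have hu' : u =ᵐ[μ] u' := hu.aestronglyMeasurable.ae_eq_mk
  refine ⟨fun y => max (-C) (min C (u' y)),
    measurable_const.max (measurable_const.min hu.aestronglyMeasurable.measurable_mk),
    fun y => abs_le.2 ⟨le_max_left _ _, max_le (neg_le_self ((abs_nonneg _).trans (hFC 0 y)))
      (min_le_left _ _)⟩, ?_⟩
  refine squeeze_zero (fun N => integral_nonneg fun y => abs_nonneg _) (fun N => ?_) hFu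
  refine (integral_mono_of_nonneg (ae_of_all _ fun y => abs_nonneg _)
    ((integrable_of_abs_le (hF N) (hFC N)).sub hu).abs ?_)
  filter_upwards [hu'] with y hy
  obtain ⟨hlo, hhi⟩ := abs_le.1 (hFC N y)
  -- `F N y` is fixed by the clamp to `[-C, C]`, which is 1-Lipschitz
  calc |F N y - max (-C) (min C (u' y))|
      = |max (-C) (min C (F N y)) - max (-C) (min C (u' y))| := by
        rw [min_eq_right hhi, max_eq_right hlo]
    _ ≤ |F N y - u y| := hy ▸ abs_max_min_sub_max_min_le _ _ _ _

theorem HasCesaroCorrelationLimits.cesaroMeanTendstoInL1 (hg : ∀ n, Measurable (g n))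
    (hgC : ∀ n y, |g n y| ≤ C) (h : HasCesaroCorrelationLimits μ g) :
    CesaroMeanTendstoInL1 μ g := by
  obtain ⟨ℓ, hℓ, L, hL, hℓL⟩ := h
  have hw : ∀ N, MemLp (cesaroMean g N) 2 μ := fun N =>
    .of_bound (measurable_cesaroMean hg N).aestronglyMeasurable C
      (ae_of_all _ (abs_cesaroMean_le hgC N))
  set v : ℕ → Lp ℝ 2 μ := fun N => (hw N).toLp (cesaroMean g N)
  have hinner : ∀ N K, ⟪v N, v K⟫ = ∫ y, cesaroMean g N y * cesaroMean g K y ∂μ := by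
    intro N K
    rw [L2.inner_def]
    refine integral_congr_ae ?_
    filter_upwards [(hw N).coeFn_toLp, (hw K).coeFn_toLp] with y hN hK
    simp [v, hN, hK, mul_comm]
  have hnorm : Tendsto (fun N => ‖v N‖ ^ 2) atTop (𝓝 L) := hL.congr fun N => by
    rw [← real_inner_self_eq_norm_sq, hinner, integral_cesaroMean_mul_cesaroMean hg hgC, sq,
      mul_inv]
  have hcross : ∀ K, Tendsto (fun N => ⟪v N, v K⟫) atTop
      (𝓝 ((K : ℝ)⁻¹ * ∑ m ∈ Finset.Icc 1 K, ℓ m)) := fun K =>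
    ((tendsto_finsetSum _ fun m hm => hℓ m (Finset.mem_Icc.1 hm).1).const_mul _).congr fun N => by
      rw [hinner, integral_mul_cesaroMean hg hgC (measurable_cesaroMean hg N)
        (abs_cesaroMean_le hgC N)]
      exact congrArg _ (Finset.sum_congr rfl fun m _ =>
        (integral_cesaroMean_mul hg hgC (hg m) (hgC m) N).symm)
  obtain ⟨u, hu⟩ := cauchySeq_tendsto_of_complete
    (cauchySeq_of_tendsto_norm_sq_of_tendsto_inner hnorm hcross hℓL)
  obtain ⟨gbar, hgbar, hgbarC, hlim⟩ := exists_abs_le_tendsto_integral_abs_sub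
    (measurable_cesaroMean hg) (abs_cesaroMean_le hgC) ((Lp.memLp u).integrable one_le_two)
    (tendsto_integral_abs_sub_of_tendsto_toLp hw hu)
  exact ⟨gbar, hgbar, ⟨C, hgbarC⟩, hlim⟩

theorem hasCesaroCorrelationLimits_iff_cesaroMeanTendstoInL1 (hg : ∀ n, Measurable (g n))
    (hgC : ∀ n y, |g n y| ≤ C) : HasCesaroCorrelationLimits μ g ↔ CesaroMeanTendstoInL1 μ g :=
  ⟨fun h => h.cesaroMeanTendstoInL1 hg hgC, fun h => h.hasCesaroCorrelationLimits hg hgC⟩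

end Cesaro

theorem stmt3_general {M D : ℕ} (Q : Set (Fin M → ℝ))
    (hQfin : volume Q < ⊤)
    (U : ℕ → (Fin M → ℝ) → EuclideanSpace ℝ (Fin D)) (hU : ∀ n, Measurable (U n)) :
    WeaklySConv Q U ↔
      (∀ b : EuclideanSpace ℝ (Fin D) → ℝ, Continuous b → HasCompactSupport b →
        ∃ bbar : (Fin M → ℝ) → ℝ, Measurable bbar ∧ (∃ C : ℝ, ∀ y, |bbar y| ≤ C) ∧
          Tendsto (fun N : ℕ =>
              ∫ y in Q, |(N : ℝ)⁻¹ * (∑ n ∈ Finset.Icc 1 N, b (U n y)) - bbar y|)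
            atTop (𝓝 0)) := by
  have : IsFiniteMeasure (volume.restrict Q) := ⟨by rwa [Measure.restrict_apply_univ]⟩
  refine forall₃_congr fun b hb hbc => ?_
  obtain ⟨C, hC⟩ := hbc.exists_bound_of_continuous hb
  exact hasCesaroCorrelationLimits_iff_cesaroMeanTendstoInL1
    (fun n => hb.measurable.comp (hU n)) fun n y => hC (U n y)

/-- Theorem 2.1 (i): `(U_n)` is weakly (S)-convergent iff for every
`b ∈ C_c(ℝ^D)` the Cesàro averages `(1/N) ∑_{n=1}^N b(U_n)` converge strongly in `L¹(Q)`
to some `b̄ ∈ L^∞(Q)`. -/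
theorem stmt3 {M D : ℕ} (Q : Set (Fin M → ℝ)) (hQm : MeasurableSet Q)
    (hQfin : volume Q < ⊤)
    (U : ℕ → (Fin M → ℝ) → EuclideanSpace ℝ (Fin D)) (hU : ∀ n, Measurable (U n)) :
    WeaklySConv Q U ↔
      (∀ b : EuclideanSpace ℝ (Fin D) → ℝ, Continuous b → HasCompactSupport b →
        ∃ bbar : (Fin M → ℝ) → ℝ, Measurable bbar ∧ (∃ C : ℝ, ∀ y, |bbar y| ≤ C) ∧
          Tendsto (fun N : ℕ =>
              ∫ y in Q, |(N : ℝ)⁻¹ * (∑ n ∈ Finset.Icc 1 N, b (U n y)) - bbar y|)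
            atTop (𝓝 0)) :=
  stmt3_general Q hQfin U hU
end
end

section
/- Suppose (U_n)_{n≥1} is strongly asymptotically stationary, i.e., for every b ∈ C_c(ℝ^D): (SuA2) for every fixed m, the limit lim_{n→∞} ∫_Q b(U_n) b(U_m) dy exists; and (SuA3) there exists a function ω(b,·) with ω(b,k) → 0 as k → ∞ such that |∫_Q [b(U_{k_1}) b(U_{k_2}) − b(U_{k_1+n}) b(U_{k_2+n})] dy| ≤ ω(b,k) for all 1 ≤ k ≤ k_1 ≤ k_2 and all n ≥ 0. Then (U_n) is strongly (S)-convergent; in particular, for every b ∈ C_c(ℝ^D) there exists \bar{b} ∈ L^∞(Q), independent of w, such that for every w ∈ W, (1/w_N) Σ_{n=1}^N w(n/N) b(U_n) → \bar{b} strongly in L¹(Q) as N → ∞. -/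
/-!
The shift condition (SuA3) makes `k ↦ ∫ b(U_k) b(U_{k+d})` Cauchy uniformly in `d`; together
with (SuA2) this forces the correlations `∫ b(U_n) b(U_m)` to converge to a single constant `L`
as `n`, `m` and `|n - m|` tend to infinity. The normalised weights `w(n/N) / w_N` are nonnegative,
sum to one and are `O(1/N)` each, so weighted averages only see this off-diagonal regime: the
single averages of the correlations converge to `ℓ m` and the double ones to `L`. For the
averaged functions `B_N^w = w_N⁻¹ ∑ w(n/N) b(U_n)` this gives
`‖B_N^w - B_{N'}^{w'}‖₂² = ⟨B, B⟩ - 2 ⟨B, B'⟩ + ⟨B', B'⟩ → L - 2L + L = 0`, so all of them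
converge in `L²`, hence in `L¹`, to one limit, which can be clamped to the bound of `b`.
-/

open MeasureTheory Filter Topology

noncomputable section

/-- Strong (S)-convergence of a sequence `(U_n)_{n ≥ 1}` of measurable functions `Q → ℝ^D`. -/
def StronglySConv {M D : ℕ} (Q : Set (Fin M → ℝ))
    (U : ℕ → (Fin M → ℝ) → EuclideanSpace ℝ (Fin D)) : Prop :=
  ∀ b : EuclideanSpace ℝ (Fin D) → ℝ, Continuous b → HasCompactSupport b →
    ∃ ℓ : ℕ → ℝ,
      (∀ w : ℝ → ℝ, IsWeight w → ∀ m : ℕ, 1 ≤ m →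
        Tendsto (fun N : ℕ => (wsum w N)⁻¹ *
            ∑ n ∈ Finset.Icc 1 N, w ((n : ℝ) / (N : ℝ)) * ∫ y in Q, b (U n y) * b (U m y))
          atTop (𝓝 (ℓ m))) ∧
      (∀ w : ℝ → ℝ, IsWeight w → ∃ L : ℝ,
        Tendsto (fun N : ℕ => ((wsum w N) ^ 2)⁻¹ *
            ∑ n ∈ Finset.Icc 1 N, ∑ m ∈ Finset.Icc 1 N,
              w ((n : ℝ) / (N : ℝ)) * w ((m : ℝ) / (N : ℝ)) *
                ∫ y in Q, b (U n y) * b (U m y)) atTop (𝓝 L) ∧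
        Tendsto (fun K : ℕ => (wsum w K)⁻¹ *
            ∑ m ∈ Finset.Icc 1 K, w ((m : ℝ) / (K : ℝ)) * ℓ m) atTop (𝓝 L))

structure IsFlatProbVec (s : Finset ℕ) (p : ℕ → ℝ) (δ : ℝ) : Prop where
  nonneg : ∀ n ∈ s, 0 ≤ p n
  sum_eq_one : ∑ n ∈ s, p n = 1
  le : ∀ n ∈ s, p n ≤ δ

namespace IsFlatProbVec

variable {s t : Finset ℕ} {p q : ℕ → ℝ} {δ δ' : ℝ}

lemma nonempty (hp : IsFlatProbVec s p δ) : s.Nonempty :=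
  Finset.nonempty_of_sum_ne_zero (by rw [hp.sum_eq_one]; exact one_ne_zero)

lemma delta_nonneg (hp : IsFlatProbVec s p δ) : 0 ≤ δ := by
  obtain ⟨n, hn⟩ := hp.nonempty
  exact (hp.nonneg n hn).trans (hp.le n hn)

lemma abs_sum_mul_sub_le_sum (hp : IsFlatProbVec s p δ) (a : ℕ → ℝ) (l : ℝ) :
    |∑ n ∈ s, p n * a n - l| ≤ ∑ n ∈ s, p n * |a n - l| := by
  have hsub : ∑ n ∈ s, p n * a n - l = ∑ n ∈ s, p n * (a n - l) := by
    simp only [mul_sub, Finset.sum_sub_distrib, ← Finset.sum_mul, hp.sum_eq_one, one_mul]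
  rw [hsub]
  refine (Finset.abs_sum_le_sum_abs _ _).trans_eq (Finset.sum_congr rfl fun n hn => ?_)
  rw [abs_mul, abs_of_nonneg (hp.nonneg n hn)]

lemma abs_sum_mul_sub_le (hp : IsFlatProbVec s p δ) {a : ℕ → ℝ} {l ε : ℝ}
    (h : ∀ n ∈ s, |a n - l| ≤ ε) : |∑ n ∈ s, p n * a n - l| ≤ ε :=
  calc |∑ n ∈ s, p n * a n - l| ≤ ∑ n ∈ s, p n * |a n - l| := hp.abs_sum_mul_sub_le_sum a l
    _ ≤ ∑ n ∈ s, p n * ε :=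
      Finset.sum_le_sum fun n hn => mul_le_mul_of_nonneg_left (h n hn) (hp.nonneg n hn)
    _ = ε := by rw [← Finset.sum_mul, hp.sum_eq_one, one_mul]

lemma abs_sum_mul_sub_le_add (hp : IsFlatProbVec s p δ) {a : ℕ → ℝ} {l ε A : ℝ}
    (B : Finset ℕ) (hε : 0 ≤ ε) (hA : ∀ n ∈ s, |a n - l| ≤ A)
    (hgood : ∀ n ∈ s, n ∉ B → |a n - l| ≤ ε) :
    |∑ n ∈ s, p n * a n - l| ≤ ε + B.card * δ * A := by
  classical
  have hA0 : 0 ≤ A := by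
    obtain ⟨n, hn⟩ := hp.nonempty
    exact (abs_nonneg _).trans (hA n hn)
  have hpoint : ∀ n ∈ s, p n * |a n - l| ≤ p n * ε + if n ∈ B then p n * A else 0 := by
    intro n hn
    split_ifs with hnB
    · nlinarith [hp.nonneg n hn, hA n hn]
    · simpa using mul_le_mul_of_nonneg_left (hgood n hn hnB) (hp.nonneg n hn)
  have hbad : ∑ n ∈ s ∩ B, p n ≤ B.card * δ :=
    calc ∑ n ∈ s ∩ B, p n ≤ (s ∩ B).card • δ :=
          Finset.sum_le_card_nsmul _ _ _ fun n hn => hp.le n (Finset.mem_inter.1 hn).1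
      _ ≤ B.card * δ := by
          rw [nsmul_eq_mul]
          gcongr
          · exact hp.delta_nonneg
          · exact Finset.inter_subset_right
  calc |∑ n ∈ s, p n * a n - l| ≤ ∑ n ∈ s, p n * |a n - l| := hp.abs_sum_mul_sub_le_sum a l
    _ ≤ ∑ n ∈ s, (p n * ε + if n ∈ B then p n * A else 0) := Finset.sum_le_sum hpoint
    _ = ε + (∑ n ∈ s ∩ B, p n) * A := by
        rw [Finset.sum_add_distrib, ← Finset.sum_mul, hp.sum_eq_one, one_mul,
          Finset.sum_ite_mem, Finset.sum_mul]
    _ ≤ ε + B.card * δ * A := by gcongr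

lemma abs_sum_mul_sum_mul_sub_le (hp : IsFlatProbVec s p δ) (hq : IsFlatProbVec t q δ')
    {c : ℕ → ℕ → ℝ} {L ε A : ℝ} {K : ℕ} (hε : 0 ≤ ε) (hA : ∀ n m, |c n m - L| ≤ A)
    (hK : ∀ n m, K ≤ n → K ≤ m → (n + K ≤ m ∨ m + K ≤ n) → |c n m - L| ≤ ε) :
    |∑ n ∈ s, p n * ∑ m ∈ t, q m * c n m - L| ≤ ε + 3 * K * δ' * A + K * δ * A := by
  have hA0 : 0 ≤ A := (abs_nonneg _).trans (hA 0 0)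
  have hδ' := hq.delta_nonneg
  have hinner : ∀ n, K ≤ n → |∑ m ∈ t, q m * c n m - L| ≤ ε + 3 * K * δ' * A := by
    intro n hn
    have hcard := Finset.card_union_le (Finset.range K) (Finset.Ico (n + 1 - K) (n + K))
    set B := Finset.range K ∪ Finset.Ico (n + 1 - K) (n + K)
    rw [Finset.card_range, Nat.card_Ico] at hcard
    have hB : (B.card : ℝ) ≤ 3 * K := by exact_mod_cast (by omega : B.card ≤ 3 * K)
    refine (hq.abs_sum_mul_sub_le_add B hε (fun m _ => hA n m) fun m _ hm => ?_).trans
      (by gcongr)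
    simp only [B, Finset.mem_union, Finset.mem_range, Finset.mem_Ico, not_or, not_and_or,
      not_lt] at hm
    exact hK n m hn hm.1 (by omega)
  simpa using hp.abs_sum_mul_sub_le_add (Finset.range K) (by positivity)
    (fun n _ => hq.abs_sum_mul_sub_le fun m _ => hA n m)
    fun n _ hn => hinner n (by simpa using hn)

end IsFlatProbVec

lemma natCast_div_natCast_mem_Icc {n N : ℕ} (h : n ≤ N) :
    (n : ℝ) / N ∈ Set.Icc (0 : ℝ) 1 :=
  ⟨by positivity, div_le_one_of_le₀ (by exact_mod_cast h) N.cast_nonneg⟩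

lemma sum_Icc_one_eq_sum_range (f : ℕ → ℝ) (N : ℕ) :
    ∑ n ∈ Finset.Icc 1 N, f n = ∑ k ∈ Finset.range N, f (k + 1) := by
  induction N with
  | zero => simp
  | succ N ih => rw [Finset.sum_Icc_succ_top (by omega), ih, Finset.sum_range_succ]

lemma integral_le_wsum_div_add {w : ℝ → ℝ} (hw : ContinuousOn w (Set.Icc 0 1)) {N : ℕ}
    (hN : 0 < N) {η : ℝ} (hη : ∀ x ∈ Set.Icc (0 : ℝ) 1, ∀ y ∈ Set.Icc (0 : ℝ) 1,
      |x - y| ≤ 1 / N → w x ≤ w y + η) :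
    ∫ z in (0 : ℝ)..1, w z ≤ wsum w N / N + η := by
  have hN' : (0 : ℝ) < N := by exact_mod_cast hN
  set x : ℕ → ℝ := fun k => k / N
  have hx : ∀ k ≤ N, x k ∈ Set.Icc (0 : ℝ) 1 := fun k hk => natCast_div_natCast_mem_Icc hk
  have hstep : ∀ k, x (k + 1) - x k = 1 / N := fun k => by
    simp only [x]; push_cast; ring
  have hint : ∀ k < N, IntervalIntegrable w volume (x k) (x (k + 1)) := fun k hk =>
    (hw.mono (Set.uIcc_subset_Icc (hx k hk.le) (hx (k + 1) hk))).intervalIntegrable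
  have hpiece : ∀ k < N, ∫ z in x k..x (k + 1), w z ≤ (w (x (k + 1)) + η) / N := by
    intro k hk
    have hle : x k ≤ x (k + 1) := by linarith [hstep k, one_div_pos.2 hN']
    calc ∫ z in x k..x (k + 1), w z ≤ ∫ _ in x k..x (k + 1), (w (x (k + 1)) + η) :=
          intervalIntegral.integral_mono_on hle (hint k hk) intervalIntegrable_const fun z hz =>
            hη z (Set.Icc_subset_Icc (hx k hk.le).1 (hx (k + 1) hk).2 hz) _ (hx (k + 1) hk)
              (by rw [abs_sub_comm, abs_of_nonneg (by linarith [hz.2])]; linarith [hz.1, hstep k])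
      _ = (w (x (k + 1)) + η) / N := by
          rw [intervalIntegral.integral_const, smul_eq_mul, hstep]; ring
  calc ∫ z in (0 : ℝ)..1, w z = ∑ k ∈ Finset.range N, ∫ z in x k..x (k + 1), w z := by
        rw [intervalIntegral.sum_integral_adjacent_intervals hint]; simp [x, hN'.ne']
    _ ≤ ∑ k ∈ Finset.range N, (w (x (k + 1)) + η) / N :=
        Finset.sum_le_sum fun k hk => hpiece k (Finset.mem_range.1 hk)
    _ = wsum w N / N + η := by
        rw [← Finset.sum_div, Finset.sum_add_distrib, wsum, sum_Icc_one_eq_sum_range,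
          Finset.sum_const, Finset.card_range, nsmul_eq_mul]
        field_simp
        rfl

namespace IsWeight

variable {w : ℝ → ℝ}

lemma exists_le (hw : IsWeight w) : ∃ C, ∀ z ∈ Set.Icc (0 : ℝ) 1, w z ≤ C := by
  obtain ⟨C, hC⟩ := isCompact_Icc.bddAbove_image hw.1.continuousOn
  exact ⟨C, fun z hz => hC (Set.mem_image_of_mem w hz)⟩

lemma eventually_half_le_wsum (hw : IsWeight w) : ∀ᶠ N : ℕ in atTop, (N : ℝ) / 2 ≤ wsum w N := by
  obtain ⟨δ, hδ, hunif⟩ := Metric.uniformContinuousOn_iff.1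
    (isCompact_Icc.uniformContinuousOn_of_continuous hw.1.continuousOn) (1 / 2) one_half_pos
  filter_upwards [tendsto_one_div_atTop_nhds_zero_nat.eventually (gt_mem_nhds hδ),
    eventually_gt_atTop 0] with N hmesh hN
  have hN' : (0 : ℝ) < N := by exact_mod_cast hN
  have hriemann := integral_le_wsum_div_add hw.1.continuousOn hN (η := 1 / 2)
    fun x hx y hy hxy => by
      have := hunif x hx y hy (by rw [Real.dist_eq]; linarith)
      rw [Real.dist_eq] at this
      linarith [le_abs_self (w x - w y)]
  rw [hw.2.2] at hriemann
  have : 1 / 2 ≤ wsum w N / N := by linarith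
  rw [le_div_iff₀ hN'] at this
  linarith

lemma tendsto_wsum_atTop (hw : IsWeight w) : Tendsto (wsum w) atTop atTop :=
  tendsto_atTop_mono' _ hw.eventually_half_le_wsum
    (tendsto_natCast_atTop_atTop.atTop_div_const two_pos)

end IsWeight

def wavg (w : ℝ → ℝ) (N : ℕ) (a : ℕ → ℝ) : ℝ :=
  (wsum w N)⁻¹ * ∑ n ∈ Finset.Icc 1 N, w ((n : ℝ) / (N : ℝ)) * a n

lemma wavg_eq_sum (w : ℝ → ℝ) (N : ℕ) (a : ℕ → ℝ) :
    wavg w N a = ∑ n ∈ Finset.Icc 1 N, w ((n : ℝ) / N) / wsum w N * a n := by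
  rw [wavg, Finset.mul_sum]
  exact Finset.sum_congr rfl fun n _ => by ring

lemma mul_wavg (t : ℝ) (w : ℝ → ℝ) (N : ℕ) (a : ℕ → ℝ) :
    t * wavg w N a = wavg w N fun n => t * a n := by
  simp only [wavg, Finset.mul_sum]
  exact Finset.sum_congr rfl fun n _ => by ring

lemma wavg_mul_wavg (w w' : ℝ → ℝ) (N N' : ℕ) (a b : ℕ → ℝ) :
    wavg w N a * wavg w' N' b = wavg w N fun n => wavg w' N' fun m => a n * b m := by
  rw [mul_comm, mul_wavg]
  congr 1; funext n
  rw [mul_comm, mul_wavg]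

lemma wavg_wavg_eq (w : ℝ → ℝ) (N : ℕ) (c : ℕ → ℕ → ℝ) :
    (wavg w N fun n => wavg w N fun m => c n m) = ((wsum w N) ^ 2)⁻¹ *
      ∑ n ∈ Finset.Icc 1 N, ∑ m ∈ Finset.Icc 1 N,
        w ((n : ℝ) / (N : ℝ)) * w ((m : ℝ) / (N : ℝ)) * c n m := by
  simp only [wavg, Finset.mul_sum]
  exact Finset.sum_congr rfl fun n _ => Finset.sum_congr rfl fun m _ => by ring

lemma IsWeight.abs_wavg_le {w : ℝ → ℝ} (hw : IsWeight w) {a : ℕ → ℝ} {A : ℝ}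
    (ha : ∀ n, |a n| ≤ A) (N : ℕ) : |wavg w N a| ≤ A := by
  have hwn : ∀ n ∈ Finset.Icc 1 N, 0 ≤ w ((n : ℝ) / N) :=
    fun n hn => hw.2.1 _ (natCast_div_natCast_mem_Icc (Finset.mem_Icc.1 hn).2)
  have hW : 0 ≤ wsum w N := Finset.sum_nonneg hwn
  rw [wavg, abs_mul, abs_inv, abs_of_nonneg hW]
  calc (wsum w N)⁻¹ * |∑ n ∈ Finset.Icc 1 N, w ((n : ℝ) / N) * a n|
      ≤ (wsum w N)⁻¹ * (wsum w N * A) := by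
        gcongr
        refine (Finset.abs_sum_le_sum_abs _ _).trans ?_
        rw [wsum, Finset.sum_mul]
        refine Finset.sum_le_sum fun n hn => ?_
        rw [abs_mul, abs_of_nonneg (hwn n hn)]
        exact mul_le_mul_of_nonneg_left (ha n) (hwn n hn)
    _ ≤ A := by
        rw [← mul_assoc]
        exact mul_le_of_le_one_left ((abs_nonneg _).trans (ha 0)) (inv_mul_le_one_of_le₀ le_rfl hW)

def TendstoOffDiagonal (c : ℕ → ℕ → ℝ) (L : ℝ) : Prop :=
  ∀ ε > 0, ∃ K : ℕ, ∀ n m, K ≤ n → K ≤ m → (n + K ≤ m ∨ m + K ≤ n) → |c n m - L| ≤ ε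

namespace IsWeight

variable {w w' : ℝ → ℝ}

lemma exists_isFlatProbVec (hw : IsWeight w) :
    ∃ δ : ℕ → ℝ, Tendsto δ atTop (𝓝 0) ∧ ∀ᶠ N in atTop,
      IsFlatProbVec (Finset.Icc 1 N) (fun n => w ((n : ℝ) / N) / wsum w N) (δ N) := by
  obtain ⟨C, hC⟩ := hw.exists_le
  have hwsum := hw.tendsto_wsum_atTop
  refine ⟨fun N => C / wsum w N, tendsto_const_nhds.div_atTop hwsum, ?_⟩
  filter_upwards [hwsum.eventually_gt_atTop 0] with N hN
  have hmem : ∀ n ∈ Finset.Icc 1 N, (n : ℝ) / N ∈ Set.Icc (0 : ℝ) 1 :=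
    fun n hn => natCast_div_natCast_mem_Icc (Finset.mem_Icc.1 hn).2
  refine ⟨fun n hn => div_nonneg (hw.2.1 _ (hmem n hn)) hN.le, ?_,
    fun n hn => div_le_div_of_nonneg_right (hC _ (hmem n hn)) hN.le⟩
  rw [← Finset.sum_div]
  exact div_self hN.ne'

theorem tendsto_wavg (hw : IsWeight w) {a : ℕ → ℝ} {l : ℝ} (ha : Tendsto a atTop (𝓝 l)) :
    Tendsto (fun N => wavg w N a) atTop (𝓝 l) := by
  obtain ⟨δ, hδ, hflat⟩ := hw.exists_isFlatProbVec
  obtain ⟨A, hA⟩ := (ha.sub_const l).abs.bddAbove_range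
  rw [Metric.tendsto_nhds]
  intro ε hε
  obtain ⟨K, hK⟩ := Metric.tendsto_atTop.1 ha (ε / 2) (half_pos hε)
  have hsmall : Tendsto (fun N => K * δ N * A) atTop (𝓝 0) := by
    simpa using (hδ.const_mul (K : ℝ)).mul_const A
  filter_upwards [hflat, hsmall.eventually (gt_mem_nhds (half_pos hε))] with N hN hN'
  rw [Real.dist_eq, wavg_eq_sum]
  have := hN.abs_sum_mul_sub_le_add (Finset.range K) (half_pos hε).le
    (fun n _ => hA ⟨n, rfl⟩) fun n _ hn => (hK n (by simpa using hn)).le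
  rw [Finset.card_range] at this
  linarith

theorem tendsto_wavg_wavg (hw : IsWeight w) (hw' : IsWeight w') {c : ℕ → ℕ → ℝ} {C L : ℝ}
    (hC : ∀ n m, |c n m| ≤ C) (hc : TendstoOffDiagonal c L) :
    Tendsto (fun p : ℕ × ℕ => wavg w p.1 fun n => wavg w' p.2 fun m => c n m)
      (atTop ×ˢ atTop) (𝓝 L) := by
  obtain ⟨δ, hδ, hflat⟩ := hw.exists_isFlatProbVec
  obtain ⟨δ', hδ', hflat'⟩ := hw'.exists_isFlatProbVec
  have hA : ∀ n m, |c n m - L| ≤ C + |L| := fun n m => (abs_sub _ _).trans (by gcongr; exact hC n m)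
  rw [Metric.tendsto_nhds]
  intro ε hε
  obtain ⟨K, hK⟩ := hc (ε / 2) (half_pos hε)
  have hsmall : Tendsto (fun p : ℕ × ℕ => 3 * K * δ' p.2 * (C + |L|) + K * δ p.1 * (C + |L|))
      (atTop ×ˢ atTop) (𝓝 0) := by
    simpa using ((((hδ'.comp tendsto_snd).const_mul (3 * K : ℝ)).mul_const (C + |L|)).add
      (((hδ.comp tendsto_fst).const_mul (K : ℝ)).mul_const (C + |L|)))
  filter_upwards [hflat.prod_inl atTop, hflat'.prod_inr atTop,
    hsmall.eventually (gt_mem_nhds (half_pos hε))] with p hp hp' hp''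
  simp only [Real.dist_eq, wavg_eq_sum]
  have := hp.abs_sum_mul_sum_mul_sub_le hp' (half_pos hε).le hA hK
  linarith

end IsWeight

lemma exists_tendsto_of_abs_sub_le {l ω : ℕ → ℝ} (hω : Tendsto ω atTop (𝓝 0))
    (hl : ∀ m m', 1 ≤ m → m ≤ m' → |l m - l m'| ≤ ω m) :
    ∃ L, Tendsto l atTop (𝓝 L) ∧ ∀ m, 1 ≤ m → |l m - L| ≤ ω m := by
  have hcauchy : CauchySeq l := Metric.cauchySeq_iff'.2 fun ε hε => by
    obtain ⟨K, hK, hK1⟩ := ((hω.eventually (gt_mem_nhds hε)).and (eventually_ge_atTop 1)).exists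
    exact ⟨K, fun n hn => by rw [Real.dist_eq, abs_sub_comm]; exact (hl K n hK1 hn).trans_lt hK⟩
  obtain ⟨L, hL⟩ := cauchySeq_tendsto_of_complete hcauchy
  exact ⟨L, hL, fun m hm => le_of_tendsto (tendsto_const_nhds.sub hL).abs
    ((eventually_ge_atTop m).mono fun m' hm' => hl m m' hm hm')⟩

/-- The shift bound makes `m ↦ c m (m + d)` Cauchy uniformly in `d`; comparing every far
correlation `c n (n + d)` with the single row `c K₀ (K₀ + ·)`, whose limit `l K₀` is close to
`L`, gives the off-diagonal limit. -/
theorem exists_tendstoOffDiagonal {c : ℕ → ℕ → ℝ} (hsymm : ∀ n m, c n m = c m n)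
    (hlim : ∀ m, 1 ≤ m → ∃ l, Tendsto (fun n => c n m) atTop (𝓝 l))
    {ω : ℕ → ℝ} (hω : Tendsto ω atTop (𝓝 0))
    (hshift : ∀ k k₁ k₂, 1 ≤ k → k ≤ k₁ → k₁ ≤ k₂ → ∀ s,
      |c k₁ k₂ - c (k₁ + s) (k₂ + s)| ≤ ω k) :
    ∃ (l : ℕ → ℝ) (L : ℝ), (∀ m, 1 ≤ m → Tendsto (fun n => c n m) atTop (𝓝 (l m))) ∧
      Tendsto l atTop (𝓝 L) ∧ TendstoOffDiagonal c L := by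
  have hrow : ∀ m m' d, 1 ≤ m → m ≤ m' → |c m (m + d) - c m' (m' + d)| ≤ ω m := by
    intro m m' d hm hmm'
    have h := hshift m m (m + d) hm le_rfl (Nat.le_add_right m d) (m' - m)
    rwa [show m + (m' - m) = m' by omega, show m + d + (m' - m) = m' + d by omega] at h
  choose! l hl using hlim
  have hl' : ∀ m, 1 ≤ m → Tendsto (fun d => c m (m + d)) atTop (𝓝 (l m)) := fun m hm =>
    ((hl m hm).comp (tendsto_add_atTop_nat m)).congr fun d => by
      rw [Function.comp_apply, hsymm, add_comm]
  obtain ⟨L, hL, hlL⟩ := exists_tendsto_of_abs_sub_le hω fun m m' hm hmm' =>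
    le_of_tendsto ((hl' m hm).sub (hl' m' (hm.trans hmm'))).abs
      (Eventually.of_forall fun d => hrow m m' d hm hmm')
  refine ⟨l, L, hl, hL, fun ε hε => ?_⟩
  obtain ⟨K₀, hK₀, hK₀1⟩ :=
    ((hω.eventually (gt_mem_nhds (by positivity : 0 < ε / 3))).and (eventually_ge_atTop 1)).exists
  obtain ⟨D, hD⟩ := Metric.tendsto_atTop.1 (hl' K₀ hK₀1) (ε / 3) (by positivity)
  have hfar : ∀ n d, max K₀ D ≤ n → max K₀ D ≤ d → |c n (n + d) - L| ≤ ε := by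
    intro n d hn hd
    have h₁ := hrow K₀ n d hK₀1 (le_of_max_le_left hn)
    have h₂ := hD d (le_of_max_le_right hd)
    have h₃ := hlL K₀ hK₀1
    rw [Real.dist_eq] at h₂
    rw [abs_sub_comm] at h₁
    have := abs_sub_le (c n (n + d)) (c K₀ (K₀ + d)) L
    have := abs_sub_le (c K₀ (K₀ + d)) (l K₀) L
    linarith
  refine ⟨max K₀ D, fun n m hn hm hnm => ?_⟩
  rcases hnm with h | h
  · obtain ⟨d, rfl⟩ := Nat.exists_eq_add_of_le (le_of_add_le_left h)
    exact hfar n d hn (by omega)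
  · obtain ⟨d, rfl⟩ := Nat.exists_eq_add_of_le (le_of_add_le_left h)
    rw [hsymm]
    exact hfar m d hm (by omega)

theorem exists_forall_tendsto_of_tendsto_dist {X ι : Type*} [PseudoMetricSpace X]
    [CompleteSpace X] [Nonempty ι] {x : ι → ℕ → X}
    (h : ∀ i j, Tendsto (fun p : ℕ × ℕ => dist (x i p.1) (x j p.2)) (atTop ×ˢ atTop) (𝓝 0)) :
    ∃ g, ∀ i, Tendsto (x i) atTop (𝓝 g) := by
  obtain ⟨i₀⟩ := ‹Nonempty ι›
  have hcauchy : CauchySeq (x i₀) :=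
    cauchySeq_iff_tendsto_dist_atTop_0.2 (by rw [← prod_atTop_atTop_eq]; exact h i₀ i₀)
  obtain ⟨g, hg⟩ := cauchySeq_tendsto_of_complete hcauchy
  refine ⟨g, fun i => tendsto_iff_dist_tendsto_zero.2 ?_⟩
  have hprod : Tendsto (fun p : ℕ × ℕ => dist (x i p.1) g) (atTop ×ˢ atTop) (𝓝 0) :=
    squeeze_zero (fun _ => dist_nonneg) (fun p => dist_triangle _ (x i₀ p.2) _)
      (by simpa using (h i i₀).add ((tendsto_iff_dist_tendsto_zero.1 hg).comp tendsto_snd))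
  rw [← map_fst_prod atTop (atTop : Filter ℕ)]
  exact tendsto_map'_iff.2 hprod

section L1

variable {α : Type*} [MeasurableSpace α] {μ : Measure α}

lemma MeasureTheory.Integrable.dist_toL1 {u : α → ℝ} (hu : Integrable u μ) (G : α →₁[μ] ℝ) :
    dist (hu.toL1 u) G = ∫ x, |u x - G x| ∂μ := by
  rw [dist_eq_norm, L1.norm_eq_integral_norm]
  refine integral_congr_ae ?_
  filter_upwards [Lp.coeFn_sub (hu.toL1 u) G, hu.coeFn_toL1] with x h₁ h₂
  rw [h₁, Pi.sub_apply, h₂, Real.norm_eq_abs]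

theorem exists_tendsto_integral_abs_sub {ι : Type*} [Nonempty ι] {f : ι → ℕ → α → ℝ}
    (hf : ∀ i N, Integrable (f i N) μ)
    (h : ∀ i j, Tendsto (fun p : ℕ × ℕ => ∫ x, |f i p.1 x - f j p.2 x| ∂μ)
      (atTop ×ˢ atTop) (𝓝 0)) :
    ∃ g : α → ℝ, Measurable g ∧ Integrable g μ ∧
      ∀ i, Tendsto (fun N => ∫ x, |f i N x - g x| ∂μ) atTop (𝓝 0) := by
  obtain ⟨G, hG⟩ := exists_forall_tendsto_of_tendsto_dist
    (x := fun i N => (hf i N).toL1 (f i N)) fun i j => (h i j).congr fun p => by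
      rw [Integrable.dist_toL1]
      refine integral_congr_ae ?_
      filter_upwards [(hf j p.2).coeFn_toL1] with x hx
      rw [hx]
  refine ⟨G, (Lp.stronglyMeasurable G).measurable, L1.integrable_coeFn G, fun i => ?_⟩
  exact (tendsto_iff_dist_tendsto_zero.1 (hG i)).congr fun N => (hf i N).dist_toL1 G

/-- Cauchy–Schwarz: `∫ |h| ≤ (∫ h²)^{1/2} μ(α)^{1/2}`. -/
theorem tendsto_integral_abs_of_tendsto_integral_sq [IsFiniteMeasure μ] {ι : Type*}
    {l : Filter ι} {h : ι → α → ℝ} (hL2 : ∀ i, MemLp (h i) 2 μ)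
    (hsq : Tendsto (fun i => ∫ x, h i x ^ 2 ∂μ) l (𝓝 0)) :
    Tendsto (fun i => ∫ x, |h i x| ∂μ) l (𝓝 0) := by
  have hbound : ∀ i, ∫ x, |h i x| ∂μ ≤
      (∫ x, h i x ^ 2 ∂μ) ^ (1 / 2 : ℝ) * μ.real Set.univ ^ (1 / 2 : ℝ) := by
    intro i
    have hL2' : MemLp (fun x => |h i x|) (ENNReal.ofReal 2) μ := by
      rw [ENNReal.ofReal_ofNat]
      simpa only [Real.norm_eq_abs] using (hL2 i).norm
    have := integral_mul_le_Lp_mul_Lq_of_nonneg Real.HolderConjugate.two_two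
      (ae_of_all μ fun x => abs_nonneg (h i x)) (ae_of_all μ fun _ => zero_le_one) hL2'
      (memLp_const (1 : ℝ))
    simpa only [mul_one, Real.rpow_two, sq_abs, one_pow, integral_const, smul_eq_mul] using this
  refine squeeze_zero (fun i => integral_nonneg fun x => abs_nonneg _) hbound ?_
  simpa using (hsq.rpow_const (p := 1 / 2) (Or.inr (by norm_num))).mul_const
    (μ.real Set.univ ^ (1 / 2 : ℝ))

lemma integrable_wavg {f : ℕ → α → ℝ} (hf : ∀ n, Integrable (f n) μ) (w : ℝ → ℝ) (N : ℕ) :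
    Integrable (fun x => wavg w N fun n => f n x) μ :=
  (integrable_finsetSum _ fun n _ => (hf n).const_mul _).const_mul _

lemma integral_wavg {f : ℕ → α → ℝ} (hf : ∀ n, Integrable (f n) μ) (w : ℝ → ℝ) (N : ℕ) :
    ∫ x, (wavg w N fun n => f n x) ∂μ = wavg w N fun n => ∫ x, f n x ∂μ := by
  simp only [wavg]
  rw [integral_const_mul, integral_finsetSum _ fun n _ => (hf n).const_mul _]
  simp only [integral_const_mul]

variable [IsFiniteMeasure μ] {f : ℕ → α → ℝ} {C : ℝ}

lemma integrable_mul_of_abs_le_s13 (hf : ∀ n, Measurable (f n)) (hfC : ∀ n x, |f n x| ≤ C)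
    (n m : ℕ) : Integrable (fun x => f n x * f m x) μ :=
  Integrable.of_bound ((hf n).mul (hf m)).aestronglyMeasurable (C * C) <| ae_of_all μ fun x => by
    rw [Real.norm_eq_abs, abs_mul]
    exact mul_le_mul (hfC n x) (hfC m x) (abs_nonneg _) ((abs_nonneg _).trans (hfC n x))

lemma abs_integral_mul_le (hfC : ∀ n x, |f n x| ≤ C) (n m : ℕ) :
    |∫ x, f n x * f m x ∂μ| ≤ C * C * μ.real Set.univ := by
  rw [← Real.norm_eq_abs]
  refine norm_integral_le_of_norm_le_const (ae_of_all μ fun x => ?_)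
  rw [Real.norm_eq_abs, abs_mul]
  exact mul_le_mul (hfC n x) (hfC m x) (abs_nonneg _) ((abs_nonneg _).trans (hfC n x))

theorem exists_tendstoOffDiagonal_integral_mul (hf : ∀ n, Measurable (f n))
    (hfC : ∀ n x, |f n x| ≤ C)
    (hlim : ∀ m, 1 ≤ m → ∃ l, Tendsto (fun n => ∫ x, f n x * f m x ∂μ) atTop (𝓝 l))
    {ω : ℕ → ℝ} (hω : Tendsto ω atTop (𝓝 0))
    (hshift : ∀ k k₁ k₂, 1 ≤ k → k ≤ k₁ → k₁ ≤ k₂ → ∀ s,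
      |∫ x, (f k₁ x * f k₂ x - f (k₁ + s) x * f (k₂ + s) x) ∂μ| ≤ ω k) :
    ∃ (l : ℕ → ℝ) (L : ℝ),
      (∀ m, 1 ≤ m → Tendsto (fun n => ∫ x, f n x * f m x ∂μ) atTop (𝓝 (l m))) ∧
      Tendsto l atTop (𝓝 L) ∧ TendstoOffDiagonal (fun n m => ∫ x, f n x * f m x ∂μ) L := by
  have hint := integrable_mul_of_abs_le_s13 (μ := μ) hf hfC
  refine exists_tendstoOffDiagonal
    (fun n m => integral_congr_ae (ae_of_all μ fun _ => mul_comm _ _)) hlim hω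
    fun k k₁ k₂ hk h₁ h₂ s => ?_
  rw [← integral_sub (hint _ _) (hint _ _)]
  exact hshift k k₁ k₂ hk h₁ h₂ s

variable {L : ℝ} {w w' : ℝ → ℝ}

theorem tendsto_integral_wavg_mul_wavg (hf : ∀ n, Measurable (f n)) (hfC : ∀ n x, |f n x| ≤ C)
    (hc : TendstoOffDiagonal (fun n m => ∫ x, f n x * f m x ∂μ) L)
    (hw : IsWeight w) (hw' : IsWeight w') :
    Tendsto (fun p : ℕ × ℕ =>
        ∫ x, (wavg w p.1 fun n => f n x) * (wavg w' p.2 fun m => f m x) ∂μ)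
      (atTop ×ˢ atTop) (𝓝 L) := by
  have hint := integrable_mul_of_abs_le_s13 (μ := μ) hf hfC
  refine (hw.tendsto_wavg_wavg hw' (abs_integral_mul_le hfC) hc).congr fun p => ?_
  simp only [wavg_mul_wavg]
  rw [integral_wavg fun n => integrable_wavg (hint n) _ _]
  simp only [integral_wavg (hint _)]

theorem tendsto_integral_sq_wavg_sub_wavg (hf : ∀ n, Measurable (f n))
    (hfC : ∀ n x, |f n x| ≤ C) (hc : TendstoOffDiagonal (fun n m => ∫ x, f n x * f m x ∂μ) L)
    (hw : IsWeight w) (hw' : IsWeight w') :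
    Tendsto (fun p : ℕ × ℕ =>
        ∫ x, ((wavg w p.1 fun n => f n x) - wavg w' p.2 fun n => f n x) ^ 2 ∂μ)
      (atTop ×ˢ atTop) (𝓝 0) := by
  have hint : ∀ v N v' N', Integrable
      (fun x => (wavg v N fun n => f n x) * wavg v' N' fun n => f n x) μ := fun v N v' N' => by
    simp only [wavg_mul_wavg]
    exact integrable_wavg (fun n => integrable_wavg (integrable_mul_of_abs_le_s13 hf hfC n) _ _) _ _
  have hexp : ∀ p : ℕ × ℕ, ∫ x, ((wavg w p.1 fun n => f n x) - wavg w' p.2 fun n => f n x) ^ 2 ∂μ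
      = ∫ x, (wavg w p.1 fun n => f n x) * (wavg w p.1 fun n => f n x) ∂μ
        - 2 * ∫ x, (wavg w p.1 fun n => f n x) * (wavg w' p.2 fun n => f n x) ∂μ
        + ∫ x, (wavg w' p.2 fun n => f n x) * (wavg w' p.2 fun n => f n x) ∂μ := by
    intro p
    rw [← integral_const_mul, ← integral_sub, ← integral_add]
    · exact integral_congr_ae (ae_of_all μ fun x => by ring)
    · exact (hint _ _ _ _).sub ((hint _ _ _ _).const_mul 2)
    · exact hint _ _ _ _
    · exact hint _ _ _ _
    · exact (hint _ _ _ _).const_mul 2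
  have hfst : Tendsto (fun p : ℕ × ℕ => (p.1, p.1)) (atTop ×ˢ atTop) (atTop ×ˢ atTop) :=
    tendsto_fst.prodMk tendsto_fst
  have hsnd : Tendsto (fun p : ℕ × ℕ => (p.2, p.2)) (atTop ×ˢ atTop) (atTop ×ˢ atTop) :=
    tendsto_snd.prodMk tendsto_snd
  have h11 := (tendsto_integral_wavg_mul_wavg hf hfC hc hw hw).comp hfst
  have h12 := tendsto_integral_wavg_mul_wavg hf hfC hc hw hw'
  have h22 := (tendsto_integral_wavg_mul_wavg hf hfC hc hw' hw').comp hsnd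
  have h := (h11.sub (h12.const_mul 2)).add h22
  rw [show L - 2 * L + L = 0 by ring] at h
  exact h.congr fun p => (hexp p).symm

/-- The averages are Cauchy in `L²` jointly over all weights, so they share one `L¹` limit;
clamping it to `[-C, C]` keeps it a limit because the averages already lie in `[-C, C]`. -/
theorem exists_tendsto_integral_abs_wavg_sub (hf : ∀ n, Measurable (f n)) (hfC : ∀ n x, |f n x| ≤ C)
    (hc : TendstoOffDiagonal (fun n m => ∫ x, f n x * f m x ∂μ) L) :
    ∃ g : α → ℝ, Measurable g ∧ (∀ x, |g x| ≤ C) ∧ ∀ w, IsWeight w →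
      Tendsto (fun N => ∫ x, |(wavg w N fun n => f n x) - g x| ∂μ) atTop (𝓝 0) := by
  have hint : ∀ w N, Integrable (fun x => wavg w N fun n => f n x) μ := fun w N =>
    integrable_wavg (fun n => Integrable.of_bound (hf n).aestronglyMeasurable C
      (ae_of_all μ fun x => hfC n x)) w N
  have hbd : ∀ w, IsWeight w → ∀ N x, |wavg w N fun n => f n x| ≤ C :=
    fun w hw N x => hw.abs_wavg_le (fun n => hfC n x) N
  have : Nonempty {w // IsWeight w} :=
    ⟨⟨fun _ => 1, contDiffOn_const, fun _ _ => zero_le_one, by simp⟩⟩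
  obtain ⟨g, hg, hgint, hlim⟩ := exists_tendsto_integral_abs_sub
    (f := fun (w : {w // IsWeight w}) N x => wavg w N fun n => f n x) (fun w N => hint w N)
    fun w w' => tendsto_integral_abs_of_tendsto_integral_sq
      (fun p => MemLp.of_bound ((hint _ _).sub (hint _ _)).aestronglyMeasurable (C + C)
        (ae_of_all μ fun x => (abs_sub _ _).trans (add_le_add (hbd w w.2 _ x) (hbd w' w'.2 _ x))))
      (tendsto_integral_sq_wavg_sub_wavg hf hfC hc w.2 w'.2)
  refine ⟨fun x => max (-C) (min C (g x)), measurable_const.max (measurable_const.min hg),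
    fun x => abs_le.2 ⟨le_max_left _ _, max_le (by linarith [(abs_nonneg _).trans (hfC 0 x)])
      (min_le_left _ _)⟩,
    fun w hw => squeeze_zero (fun _ => integral_nonneg fun _ => abs_nonneg _) (fun N => ?_)
      (hlim ⟨w, hw⟩)⟩
  refine integral_mono_of_nonneg (ae_of_all μ fun _ => abs_nonneg _)
    ((hint w N).sub hgint).abs (ae_of_all μ fun x => ?_)
  set F := wavg w N fun n => f n x
  have hx : -C ≤ F ∧ F ≤ C := abs_le.1 (hbd w hw N x)
  calc |F - max (-C) (min C (g x))| = |max (-C) (min C F) - max (-C) (min C (g x))| := by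
        rw [min_eq_right hx.2, max_eq_right hx.1]
    _ ≤ |min C F - min C (g x)| := by
        simpa using abs_max_sub_max_le_max (-C) (min C F) (-C) (min C (g x))
    _ ≤ |F - g x| := by simpa using abs_min_sub_min_le_max C F C (g x)

end L1

theorem stmt13_general {M D : ℕ} (Q : Set (Fin M → ℝ))
    (hQfin : volume Q < ⊤)
    (U : ℕ → (Fin M → ℝ) → EuclideanSpace ℝ (Fin D)) (hU : ∀ n, Measurable (U n))
    (hA : ∀ b : EuclideanSpace ℝ (Fin D) → ℝ, Continuous b → HasCompactSupport b →
      (∀ m : ℕ, 1 ≤ m → ∃ l : ℝ,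
        Tendsto (fun n : ℕ => ∫ y in Q, b (U n y) * b (U m y)) atTop (𝓝 l)) ∧
      (∃ ω : ℕ → ℝ, Tendsto ω atTop (𝓝 0) ∧
        ∀ k k₁ k₂ : ℕ, 1 ≤ k → k ≤ k₁ → k₁ ≤ k₂ → ∀ n : ℕ,
          |∫ y in Q,
              (b (U k₁ y) * b (U k₂ y) - b (U (k₁ + n) y) * b (U (k₂ + n) y))| ≤ ω k)) :
    StronglySConv Q U ∧
    (∀ b : EuclideanSpace ℝ (Fin D) → ℝ, Continuous b → HasCompactSupport b →
      ∃ bbar : (Fin M → ℝ) → ℝ, Measurable bbar ∧ (∃ C : ℝ, ∀ y, |bbar y| ≤ C) ∧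
        ∀ w : ℝ → ℝ, IsWeight w →
          Tendsto (fun N : ℕ =>
              ∫ y in Q, |(wsum w N)⁻¹ *
                  (∑ n ∈ Finset.Icc 1 N, w ((n : ℝ) / (N : ℝ)) * b (U n y)) - bbar y|)
            atTop (𝓝 0)) := by
  have : IsFiniteMeasure (volume.restrict Q) := isFiniteMeasure_restrict.2 hQfin.ne
  refine ⟨fun b hbc hbs => ?_, fun b hbc hbs => ?_⟩
  all_goals
    obtain ⟨C, hC⟩ := hbc.bounded_above_of_compact_support hbs
    have hbU : ∀ n y, |b (U n y)| ≤ C := fun n y => hC (U n y)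
    obtain ⟨hlim, ω, hω, hshift⟩ := hA b hbc hbs
    obtain ⟨l, L, hl, hL, hoff⟩ := exists_tendstoOffDiagonal_integral_mul
      (fun n => hbc.measurable.comp (hU n)) hbU hlim hω hshift
  · refine ⟨l, fun w hw m hm => hw.tendsto_wavg (hl m hm), fun w hw => ⟨L, ?_, hw.tendsto_wavg hL⟩⟩
    have := (hw.tendsto_wavg_wavg hw (abs_integral_mul_le hbU) hoff).comp
      (tendsto_id.prodMk tendsto_id)
    simpa only [Function.comp_def, id_eq, wavg_wavg_eq] using this
  · obtain ⟨g, hg, hgC, hconv⟩ := exists_tendsto_integral_abs_wavg_sub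
      (fun n => hbc.measurable.comp (hU n)) hbU hoff
    exact ⟨g, hg, ⟨C, hgC⟩, hconv⟩

/-- Theorem 4.2: a strongly asymptotically stationary sequence — i.e. one
satisfying, for every `b ∈ C_c(ℝ^D)`, the strong correlation-limit condition (SuA2) and the
asymptotic correlation stationarity (SuA3) — is strongly (S)-convergent; in particular, for
every `b ∈ C_c(ℝ^D)` there is a `w`-independent `b̄ ∈ L^∞(Q)` such that the weighted
averages `(1/w_N) ∑_{n=1}^N w(n/N) b(U_n)` converge to `b̄` strongly in `L¹(Q)` for every
`w ∈ W`. -/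
theorem stmt13 {M D : ℕ} (Q : Set (Fin M → ℝ)) (hQm : MeasurableSet Q)
    (hQfin : volume Q < ⊤)
    (U : ℕ → (Fin M → ℝ) → EuclideanSpace ℝ (Fin D)) (hU : ∀ n, Measurable (U n))
    (hA : ∀ b : EuclideanSpace ℝ (Fin D) → ℝ, Continuous b → HasCompactSupport b →
      (∀ m : ℕ, 1 ≤ m → ∃ l : ℝ,
        Tendsto (fun n : ℕ => ∫ y in Q, b (U n y) * b (U m y)) atTop (𝓝 l)) ∧
      (∃ ω : ℕ → ℝ, Tendsto ω atTop (𝓝 0) ∧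
        ∀ k k₁ k₂ : ℕ, 1 ≤ k → k ≤ k₁ → k₁ ≤ k₂ → ∀ n : ℕ,
          |∫ y in Q,
              (b (U k₁ y) * b (U k₂ y) - b (U (k₁ + n) y) * b (U (k₂ + n) y))| ≤ ω k)) :
    StronglySConv Q U ∧
    (∀ b : EuclideanSpace ℝ (Fin D) → ℝ, Continuous b → HasCompactSupport b →
      ∃ bbar : (Fin M → ℝ) → ℝ, Measurable bbar ∧ (∃ C : ℝ, ∀ y, |bbar y| ≤ C) ∧
        ∀ w : ℝ → ℝ, IsWeight w →
          Tendsto (fun N : ℕ =>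
              ∫ y in Q, |(wsum w N)⁻¹ *
                  (∑ n ∈ Finset.Icc 1 N, w ((n : ℝ) / (N : ℝ)) * b (U n y)) - bbar y|)
            atTop (𝓝 0)) :=
  stmt13_general Q hQfin U hU hA
end
end
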